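/- arXiv:2203.12042 — 7 statements merged into one kernel-verified Lean document; each statement's English description precedes it below -/
import Mathlib

section
/- For n i.i.d. random variables X_1,...,X_n drawn from a distribution supported on [0,H] with H finite, and k = k(n) = o(n), the expectation of the ratio X_{(k+1)}/X_{(1)} of the (k+1)-th largest to the largest order statistic converges to 1 as n tends to infinity. -/
open MeasureTheory Filter Real

/-- The `r`-th largest value among `x 0, ..., x (n-1)` (equals `0` by convention
when `r > n` or `n = 0`). -/
noncomputable def kthLargest {n : ℕ} (x : Fin n → ℝ) (r : ℕ) : ℝ :=
  sSup {t : ℝ | r ≤ (Finset.univ.filter (fun i => t ≤ x i)).card}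

/-- The joint distribution of `n` i.i.d. draws from `μ`. -/
noncomputable def iidMeasure (μ : Measure ℝ) [SigmaFinite μ] (n : ℕ) : Measure (Fin n → ℝ) :=
  Measure.pi fun _ => μ

/-- `E[X_{(k+1)} / X_{(1)}]` for `n` i.i.d. draws from `μ` (the ratio is `0` when
`X_{(1)} = 0`, by the division-by-zero convention). -/
noncomputable def ratioExp (μ : Measure ℝ) [SigmaFinite μ] (n k : ℕ) : ℝ :=
  ∫ x, kthLargest x (k + 1) / kthLargest x 1 ∂(iidMeasure μ n)

section aux
variable {n : ℕ} (x : Fin n → ℝ) (r : ℕ)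

lemma kthSet_down {t t' : ℝ} (h : t' ≤ t)
    (ht : t ∈ {t : ℝ | r ≤ (Finset.univ.filter (fun i => t ≤ x i)).card}) :
    t' ∈ {t : ℝ | r ≤ (Finset.univ.filter (fun i => t ≤ x i)).card} := by
  refine le_trans ht (Finset.card_le_card ?_)
  intro i hi
  simp only [Finset.mem_filter] at *
  exact ⟨hi.1, le_trans h hi.2⟩

lemma le_kthLargest_iff (hr : 1 ≤ r) (hrn : r ≤ n) (a : ℝ) :
    a ≤ kthLargest x r ↔ r ≤ (Finset.univ.filter (fun i => a ≤ x i)).card := by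
  have hn : 0 < n := lt_of_lt_of_le hr hrn
  set S := {t : ℝ | r ≤ (Finset.univ.filter (fun i => t ≤ x i)).card} with hS
  have hun : (Finset.univ : Finset (Fin n)).Nonempty := by
    simp [Finset.univ_nonempty_iff, Fin.pos_iff_nonempty.mp hn]
  have hne : S.Nonempty := by
    refine ⟨(Finset.univ.inf' hun x), ?_⟩
    have he : Finset.univ.filter (fun i => Finset.univ.inf' hun x ≤ x i) = Finset.univ :=
      Finset.filter_true_of_mem fun i _ => Finset.inf'_le x (Finset.mem_univ i)
    show r ≤ _
    rw [he, Finset.card_univ, Fintype.card_fin]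
    exact hrn
  have hbdd : BddAbove S := by
    refine ⟨Finset.univ.sup' hun x, ?_⟩
    intro t ht
    have hcard : 0 < (Finset.univ.filter (fun i => t ≤ x i)).card := lt_of_lt_of_le hr ht
    obtain ⟨i, hi⟩ := Finset.card_pos.mp hcard
    simp only [Finset.mem_filter] at hi
    exact le_trans hi.2 (Finset.le_sup' x (Finset.mem_univ i))
  have hmem : kthLargest x r ∈ S := by
    set M := kthLargest x r with hM
    by_contra hM'
    -- every t < M is in S
    have hlt : ∀ t < M, t ∈ S := by
      intro t ht
      obtain ⟨s, hs, hts⟩ := exists_lt_of_lt_csSup hne ht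
      exact kthSet_down x r hts.le hs
    by_cases hT : (Finset.univ.filter (fun i => x i < M)).Nonempty
    · set c := (Finset.univ.filter (fun i => x i < M)).sup' hT x with hc
      have hcM : c < M := by
        apply Finset.sup'_lt_iff hT |>.mpr
        intro i hi; exact (Finset.mem_filter.mp hi).2
      set t := (c + M) / 2 with htdef
      have h1 : c < t := by rw [htdef]; linarith
      have h2 : t < M := by rw [htdef]; linarith
      have htS := hlt t h2
      refine hM' (le_trans htS (Finset.card_le_card ?_))
      intro i hi
      simp only [Finset.mem_filter, Finset.mem_univ, true_and] at *
      by_contra hMi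
      push_neg at hMi
      have : x i ≤ c := Finset.le_sup' x (by simp [hMi])
      linarith
    · refine hM' ?_
      have he : Finset.univ.filter (fun i => kthLargest x r ≤ x i) = Finset.univ := by
        refine Finset.filter_true_of_mem fun i _ => ?_
        by_contra h
        push_neg at h
        exact hT ⟨i, by simp [h, hM]⟩
      show r ≤ _
      rw [he, Finset.card_univ, Fintype.card_fin]
      exact hrn
  constructor
  · intro h
    exact kthSet_down x r h hmem
  · intro h
    exact le_csSup hbdd h

end aux

section aux2
variable {n : ℕ} (x : Fin n → ℝ) (r : ℕ)

lemma measurable_count (a : ℝ) :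
    Measurable (fun x : Fin n → ℝ => (Finset.univ.filter (fun i => a ≤ x i)).card) := by
  have : (fun x : Fin n → ℝ => (Finset.univ.filter (fun i => a ≤ x i)).card)
      = fun x => ∑ i : Fin n, if a ≤ x i then 1 else 0 := by
    funext x; rw [Finset.card_filter]
  rw [this]
  refine Finset.measurable_sum _ fun i _ => Measurable.ite ?_ measurable_const measurable_const
  exact (measurable_pi_apply i) measurableSet_Ici

lemma measurable_kthLargest (hr : 1 ≤ r) (hrn : r ≤ n) :
    Measurable (fun x : Fin n → ℝ => kthLargest x r) := by
  apply measurable_of_Ici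
  intro a
  have : (fun x : Fin n → ℝ => kthLargest x r) ⁻¹' Set.Ici a
      = {x : Fin n → ℝ | r ≤ (Finset.univ.filter (fun i => a ≤ x i)).card} := by
    ext x
    simp only [Set.mem_preimage, Set.mem_Ici, Set.mem_setOf_eq]
    exact le_kthLargest_iff x r hr hrn a
  rw [this]
  exact measurableSet_le measurable_const (measurable_count a)

variable {H : ℝ}

lemma kthLargest_nonneg (hr : 1 ≤ r) (hrn : r ≤ n) (h0 : ∀ i, 0 ≤ x i) :
    0 ≤ kthLargest x r := by
  rw [le_kthLargest_iff x r hr hrn]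
  have he : Finset.univ.filter (fun i => (0:ℝ) ≤ x i) = Finset.univ :=
    Finset.filter_true_of_mem fun i _ => h0 i
  rw [he, Finset.card_univ, Fintype.card_fin]
  exact hrn

lemma kthLargest_le (hr : 1 ≤ r) (hrn : r ≤ n) (hH : ∀ i, x i ≤ H) :
    kthLargest x r ≤ H := by
  by_contra hc
  push_neg at hc
  have ha : (H + kthLargest x r) / 2 ≤ kthLargest x r := by linarith
  rw [le_kthLargest_iff x r hr hrn] at ha
  obtain ⟨i, hi⟩ := Finset.card_pos.mp (lt_of_lt_of_le hr ha)
  simp only [Finset.mem_filter] at hi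
  have := hH i
  linarith [hi.2]

lemma kthLargest_antitone {r' : ℕ} (hr : 1 ≤ r') (hrr : r' ≤ r) (hrn : r ≤ n) :
    kthLargest x r ≤ kthLargest x r' := by
  rw [le_kthLargest_iff x r' hr (le_trans hrr hrn)]
  exact le_trans hrr ((le_kthLargest_iff x r (le_trans hr hrr) hrn _).mp le_rfl)

lemma measurableSet_count_le (a : ℝ) (m : ℕ) :
    MeasurableSet {x : Fin n → ℝ | (Finset.univ.filter (fun i => a ≤ x i)).card ≤ m} :=
  measurableSet_le (measurable_count a) measurable_const

end aux2

instance iid_prob (μ : Measure ℝ) [IsProbabilityMeasure μ] (n : ℕ) :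
    IsProbabilityMeasure (iidMeasure μ n) := by
  unfold iidMeasure; infer_instance

lemma integral_pi_prod (μ : Measure ℝ) [IsProbabilityMeasure μ] (g : ℝ → ℝ) (n : ℕ) :
    ∫ x, ∏ i : Fin n, g (x i) ∂(iidMeasure μ n) = (∫ y, g y ∂μ) ^ n := by
  letI : MeasureSpace ℝ := ⟨μ⟩
  haveI : SigmaFinite (volume : Measure ℝ) := (inferInstance : SigmaFinite μ)
  have h := MeasureTheory.integral_fintype_prod_eq_pow (ι := Fin n) g (μ := μ)
  simpa [iidMeasure, Fintype.card_fin] using h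

lemma pi_full_measure (μ : Measure ℝ) [IsProbabilityMeasure μ] {s : Set ℝ}
    (h1 : μ s = 1) (n : ℕ) :
    (iidMeasure μ n) {x : Fin n → ℝ | ∀ i, x i ∈ s} = 1 := by
  have : {x : Fin n → ℝ | ∀ i, x i ∈ s} = Set.pi Set.univ (fun _ => s) := by
    ext x; simp [Set.mem_pi]
  rw [this, iidMeasure, Measure.pi_pi]
  simp [h1]

lemma chernoff (μ : Measure ℝ) [IsProbabilityMeasure μ] (a : ℝ) (m n : ℕ) :
    ((iidMeasure μ n) {x : Fin n → ℝ |
        (Finset.univ.filter (fun i => a ≤ x i)).card ≤ m}).toReal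
      ≤ exp m * (1 - (μ (Set.Ici a)).toReal * (1 - exp (-1))) ^ n := by
  set p := (μ (Set.Ici a)).toReal with hp
  set g : ℝ → ℝ := fun y => if a ≤ y then exp (-1) else 1 with hg
  have hgmeas : Measurable g :=
    Measurable.ite measurableSet_Ici measurable_const measurable_const
  set f : (Fin n → ℝ) → ℝ := fun x => exp m * ∏ i, g (x i) with hf
  have hfmeas : Measurable f := by
    apply Measurable.const_mul
    exact Finset.measurable_prod _ fun i _ => hgmeas.comp (measurable_pi_apply i)
  have hprod : ∀ x : Fin n → ℝ, ∏ i, g (x i)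
      = exp (-1) ^ (Finset.univ.filter (fun i => a ≤ x i)).card := by
    intro x
    rw [hg]
    rw [Finset.prod_ite (fun _ => exp (-1)) (fun _ => (1:ℝ))]
    simp
  have hB : MeasurableSet {x : Fin n → ℝ |
      (Finset.univ.filter (fun i => a ≤ x i)).card ≤ m} := measurableSet_count_le a m
  have hind : ∀ x, Set.indicator {x : Fin n → ℝ |
      (Finset.univ.filter (fun i => a ≤ x i)).card ≤ m} (fun _ => (1:ℝ)) x ≤ f x := by
    intro x
    by_cases hx : x ∈ {x : Fin n → ℝ | (Finset.univ.filter (fun i => a ≤ x i)).card ≤ m}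
    · rw [Set.indicator_of_mem hx]
      have hcount : (Finset.univ.filter (fun i => a ≤ x i)).card ≤ m := hx
      have h1 : exp (-1) ^ m ≤ exp (-1) ^ (Finset.univ.filter (fun i => a ≤ x i)).card :=
        pow_le_pow_of_le_one (exp_pos _).le (Real.exp_le_one_iff.mpr (by norm_num)) hcount
      have : (1:ℝ) = exp m * exp (-1) ^ m := by
        rw [← Real.exp_nat_mul]
        rw [← Real.exp_add]
        simp
      rw [this]
      simp only [hf]
      rw [hprod]
      have := exp_pos (m:ℝ)
      nlinarith
    · rw [Set.indicator_of_notMem hx]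
      simp only [hf]
      rw [hprod]
      positivity
  have hfint : Integrable f (iidMeasure μ n) := by
    refine Integrable.mono' (integrable_const (exp m)) hfmeas.aestronglyMeasurable ?_
    refine Filter.Eventually.of_forall fun x => ?_
    simp only [hf]
    rw [hprod, norm_eq_abs, abs_of_nonneg (by positivity)]
    have h1 : exp (-1) ^ (Finset.univ.filter (fun i => a ≤ x i)).card ≤ 1 :=
      pow_le_one₀ (exp_pos _).le (Real.exp_le_one_iff.mpr (by norm_num))
    nlinarith [exp_pos (m:ℝ)]
  have key : ((iidMeasure μ n) {x : Fin n → ℝ |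
      (Finset.univ.filter (fun i => a ≤ x i)).card ≤ m}).toReal
      ≤ ∫ x, f x ∂(iidMeasure μ n) := by
    rw [← MeasureTheory.measureReal_def, ← MeasureTheory.integral_indicator_one hB]
    exact integral_mono (Integrable.indicator (integrable_const 1) hB) hfint hind
  refine le_trans key ?_
  rw [hf]
  rw [MeasureTheory.integral_const_mul]
  rw [integral_pi_prod]
  have hgint : ∫ y, g y ∂μ = 1 - p * (1 - exp (-1)) := by
    have hgeq : g = fun y => Set.indicator (Set.Ici a) (fun _ => exp (-1) - 1) y + 1 := by
      funext y
      by_cases h : a ≤ y <;> simp [hg, h, Set.indicator_of_mem, Set.mem_Ici]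
    rw [hgeq]
    rw [MeasureTheory.integral_add
      ((integrable_const _).indicator measurableSet_Ici) (integrable_const 1)]
    rw [MeasureTheory.integral_indicator_const _ measurableSet_Ici]
    simp [hp, measureReal_def]
    ring
  rw [hgint]

lemma ratio_bounds (μ : Measure ℝ) [IsProbabilityMeasure μ] {H b : ℝ}
    (hHpos : 0 < H) (hsupp : μ (Set.Icc 0 H) = 1) (hb0 : 0 < b) (hb1 : b ≤ 1)
    (n m : ℕ) (hm : m + 1 ≤ n) :
    ratioExp μ n m ≤ 1 ∧
    b * (1 - ((iidMeasure μ n) {x : Fin n → ℝ |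
        (Finset.univ.filter (fun i => b * H ≤ x i)).card ≤ m}).toReal) ≤ ratioExp μ n m := by
  have h1n : 1 ≤ n := le_trans (Nat.le_add_left 1 m) hm
  set ratio : (Fin n → ℝ) → ℝ := fun x => kthLargest x (m + 1) / kthLargest x 1 with hratio
  have hmeas : Measurable ratio :=
    (measurable_kthLargest (m+1) (Nat.le_add_left 1 m) hm).div
      (measurable_kthLargest 1 le_rfl h1n)
  have hΩ : ∀ᵐ x ∂(iidMeasure μ n), ∀ i, x i ∈ Set.Icc 0 H := by
    have hmeasset : MeasurableSet {x : Fin n → ℝ | ∀ i, x i ∈ Set.Icc 0 H} := by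
      have hpi : {x : Fin n → ℝ | ∀ i, x i ∈ Set.Icc 0 H}
          = Set.pi Set.univ (fun _ => Set.Icc 0 H) := by
        ext x; simp [Set.mem_pi, Pi.le_def, forall_and]
      rw [hpi]
      exact MeasurableSet.univ_pi (fun _ => measurableSet_Icc)
    have h := pi_full_measure μ hsupp n
    rw [ae_iff]
    have hc : {x : Fin n → ℝ | ¬ ∀ i, x i ∈ Set.Icc 0 H}
        = {x : Fin n → ℝ | ∀ i, x i ∈ Set.Icc 0 H}ᶜ := rfl
    rw [hc, MeasureTheory.prob_compl_eq_zero_iff hmeasset]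
    exact h
  have hbnd : ∀ x : Fin n → ℝ, (∀ i, x i ∈ Set.Icc 0 H) → 0 ≤ ratio x ∧ ratio x ≤ 1 := by
    intro x hx
    have h0 : ∀ i, 0 ≤ x i := fun i => (hx i).1
    have hH : ∀ i, x i ≤ H := fun i => (hx i).2
    have hf1 : 0 ≤ kthLargest x 1 := kthLargest_nonneg x 1 le_rfl h1n h0
    have hf2 : 0 ≤ kthLargest x (m+1) := kthLargest_nonneg x (m+1) (Nat.le_add_left 1 m) hm h0
    have hmono : kthLargest x (m+1) ≤ kthLargest x 1 :=
      kthLargest_antitone x (m+1) le_rfl (Nat.le_add_left 1 m) hm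
    exact ⟨div_nonneg hf2 hf1, div_le_one_of_le₀ hmono hf1⟩
  have hint : Integrable ratio (iidMeasure μ n) := by
    refine Integrable.mono' (integrable_const 1) hmeas.aestronglyMeasurable ?_
    filter_upwards [hΩ] with x hx
    rw [norm_eq_abs, abs_of_nonneg (hbnd x hx).1]
    exact (hbnd x hx).2
  constructor
  · have : ratioExp μ n m = ∫ x, ratio x ∂(iidMeasure μ n) := rfl
    rw [this]
    calc ∫ x, ratio x ∂(iidMeasure μ n) ≤ ∫ _, (1:ℝ) ∂(iidMeasure μ n) := by
          refine integral_mono_ae hint (integrable_const 1) ?_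
          filter_upwards [hΩ] with x hx
          exact (hbnd x hx).2
      _ = 1 := by simp
  · set A := {x : Fin n → ℝ | m + 1 ≤ (Finset.univ.filter (fun i => b * H ≤ x i)).card}
      with hA
    have hAmeas : MeasurableSet A :=
      measurableSet_le measurable_const (measurable_count (b * H))
    have hcompl : Aᶜ = {x : Fin n → ℝ |
        (Finset.univ.filter (fun i => b * H ≤ x i)).card ≤ m} := by
      ext x
      simp only [hA, Set.mem_compl_iff, Set.mem_setOf_eq, not_le]; omega
    have hptwise : ∀ᵐ x ∂(iidMeasure μ n),
        Set.indicator A (fun _ => b) x ≤ ratio x := by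
      filter_upwards [hΩ] with x hx
      by_cases hxA : x ∈ A
      · rw [Set.indicator_of_mem hxA]
        have h0 : ∀ i, 0 ≤ x i := fun i => (hx i).1
        have hH : ∀ i, x i ≤ H := fun i => (hx i).2
        have hf2 : b * H ≤ kthLargest x (m+1) := by
          rw [le_kthLargest_iff x (m+1) (Nat.le_add_left 1 m) hm]
          exact hxA
        have hmono : kthLargest x (m+1) ≤ kthLargest x 1 :=
          kthLargest_antitone x (m+1) le_rfl (Nat.le_add_left 1 m) hm
        have hf1H : kthLargest x 1 ≤ H := kthLargest_le x 1 le_rfl h1n hH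
        have hf1pos : 0 < kthLargest x 1 :=
          lt_of_lt_of_le (mul_pos hb0 hHpos) (le_trans hf2 hmono)
        rw [hratio]
        rw [le_div_iff₀ hf1pos]
        calc b * kthLargest x 1 ≤ b * H := by
              exact mul_le_mul_of_nonneg_left hf1H hb0.le
          _ ≤ kthLargest x (m+1) := hf2
      · rw [Set.indicator_of_notMem hxA]
        exact (hbnd x hx).1
    have hup : ∫ x, Set.indicator A (fun _ => b) x ∂(iidMeasure μ n)
        ≤ ratioExp μ n m := by
      refine integral_mono_ae ?_ hint hptwise
      exact (integrable_const b).indicator hAmeas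
    have hval : ∫ x, Set.indicator A (fun _ => b) x ∂(iidMeasure μ n)
        = ((iidMeasure μ n) A).toReal * b := by
      rw [MeasureTheory.integral_indicator_const _ hAmeas]
      simp [smul_eq_mul, measureReal_def]
    have hAc : ((iidMeasure μ n) A).toReal
        = 1 - ((iidMeasure μ n) Aᶜ).toReal := by
      have hadd : (iidMeasure μ n) A + (iidMeasure μ n) Aᶜ = 1 := by
        rw [MeasureTheory.measure_add_measure_compl hAmeas, measure_univ]
      have h1 : (iidMeasure μ n) A ≠ ⊤ := measure_ne_top _ _
      have h2 : (iidMeasure μ n) Aᶜ ≠ ⊤ := measure_ne_top _ _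
      have := congrArg ENNReal.toReal hadd
      rw [ENNReal.toReal_add h1 h2] at this
      simp at this
      linarith
    rw [← hcompl]
    calc b * (1 - ((iidMeasure μ n) Aᶜ).toReal)
        = ((iidMeasure μ n) A).toReal * b := by rw [hAc]; ring
      _ = ∫ x, Set.indicator A (fun _ => b) x ∂(iidMeasure μ n) := hval.symm
      _ ≤ ratioExp μ n m := hup

theorem stmt0 (μ : Measure ℝ) [IsProbabilityMeasure μ] (H : ℝ) (hHpos : 0 < H)
    (hsupp : μ (Set.Icc 0 H) = 1)
    (hess : ∀ δ > (0:ℝ), 0 < μ (Set.Ici (H - δ)))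
    (k : ℕ → ℕ)
    (hk : Tendsto (fun n : ℕ => (k n : ℝ) / n) atTop (nhds 0)) :
    Tendsto (fun n : ℕ => ratioExp μ n (k n)) atTop (nhds 1) := by
  -- eventually k n + 1 ≤ n
  have hkn : ∀ᶠ n : ℕ in atTop, k n + 1 ≤ n := by
    have h2 : ∀ᶠ n : ℕ in atTop, (k n : ℝ) / n < 1/2 :=
      hk.eventually (eventually_lt_nhds (by norm_num : (0:ℝ) < 1/2))
    filter_upwards [h2, eventually_ge_atTop 2] with n hn hn2
    have hnpos : (0:ℝ) < n := by positivity
    rw [div_lt_iff₀ hnpos] at hn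
    have : (k n : ℝ) + 1 ≤ n := by
      have h2n : (2:ℝ) ≤ n := by exact_mod_cast hn2
      nlinarith
    exact_mod_cast this
  rw [tendsto_order]
  constructor
  · intro a ha
    set b : ℝ := (max a 0 + 1) / 2 with hb
    have hb0 : 0 < b := by
      have : (0:ℝ) ≤ max a 0 := le_max_right a 0
      rw [hb]; linarith
    have hb1 : b < 1 := by
      have : max a 0 < 1 := max_lt ha one_pos
      rw [hb]; linarith
    have hab : a < b := by
      have h1 : a ≤ max a 0 := le_max_left a 0
      have : max a 0 < b := by
        have : max a 0 < 1 := max_lt ha one_pos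
        rw [hb]; linarith
      linarith
    set p : ℝ := (μ (Set.Ici (b * H))).toReal with hp
    have hp0 : 0 < p := by
      have hδ : (0:ℝ) < (1 - b) * H := mul_pos (by linarith) hHpos
      have := hess ((1 - b) * H) hδ
      have heq : H - (1 - b) * H = b * H := by ring
      rw [heq] at this
      exact ENNReal.toReal_pos this.ne' (measure_ne_top _ _)
    have hp1 : p ≤ 1 := by
      rw [hp]
      have h := prob_le_one (μ := μ) (s := Set.Ici (b * H))
      have := ENNReal.toReal_mono ENNReal.one_ne_top h
      simpa using this
    set q : ℝ := 1 - p * (1 - exp (-1)) with hq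
    have he1 : exp (-1) < 1 := by
      rw [Real.exp_lt_one_iff]; norm_num
    have hq1 : q < 1 := by
      have : 0 < p * (1 - exp (-1)) := mul_pos hp0 (by linarith)
      rw [hq]; linarith
    have hq0 : 0 ≤ q := by
      have h1 : p * (1 - exp (-1)) ≤ 1 * 1 := by
        apply mul_le_mul hp1 (by linarith [exp_pos (-1:ℝ)]) (by linarith [exp_pos (-1:ℝ)]) zero_le_one
      rw [hq]; linarith
    -- the error term tends to zero
    have hβ : Tendsto (fun n : ℕ => exp (k n) * q ^ n) atTop (nhds 0) := by
      set q' : ℝ := max q (1/2) with hq'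
      have hq'0 : 0 < q' := lt_of_lt_of_le (by norm_num) (le_max_right _ _)
      have hq'1 : q' < 1 := max_lt hq1 (by norm_num)
      have hbound : ∀ n : ℕ, 0 ≤ exp (k n) * q ^ n ∧
          exp (k n) * q ^ n ≤ exp (k n) * q' ^ n := by
        intro n
        constructor
        · positivity
        · apply mul_le_mul_of_nonneg_left _ (exp_pos _).le
          exact pow_le_pow_left₀ hq0 (le_max_left _ _) n
      have hmain : Tendsto (fun n : ℕ => exp (k n) * q' ^ n) atTop (nhds 0) := by
        have heq : ∀ᶠ n : ℕ in atTop, exp ((n:ℝ) * ((k n : ℝ)/n + Real.log q'))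
            = exp (k n) * q' ^ n := by
          filter_upwards [eventually_ge_atTop 1] with n hn
          have hnpos : (0:ℝ) < n := by exact_mod_cast hn
          have : (n:ℝ) * ((k n : ℝ)/n + Real.log q') = (k n : ℝ) + n * Real.log q' := by
            field_simp
          rw [this, Real.exp_add, Real.exp_nat_mul, Real.exp_log hq'0]
        have hlim : Tendsto (fun n : ℕ => (n:ℝ) * ((k n : ℝ)/n + Real.log q'))
            atTop atBot := by
          have hlq : Real.log q' < 0 := Real.log_neg hq'0 hq'1
          have hin : Tendsto (fun n : ℕ => (k n : ℝ)/n + Real.log q') atTop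
              (nhds (Real.log q')) := by
            simpa using hk.add (tendsto_const_nhds (x := Real.log q'))
          exact Filter.Tendsto.atTop_mul_neg hlq tendsto_natCast_atTop_atTop hin
        have := (Real.tendsto_exp_atBot.comp hlim)
        exact Tendsto.congr' heq this
      refine tendsto_of_tendsto_of_tendsto_of_le_of_le tendsto_const_nhds hmain
        (fun n => (hbound n).1) (fun n => (hbound n).2)
    -- b * (1 - β n) → b > a, so eventually the lower bound beats a
    have hev2 : ∀ᶠ n : ℕ in atTop, a < b * (1 - exp (k n) * q ^ n) := by
      have : Tendsto (fun n : ℕ => b * (1 - exp (k n) * q ^ n)) atTop (nhds b) := by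
        have h1 : Tendsto (fun n : ℕ => 1 - exp (k n) * q ^ n) atTop (nhds 1) := by
          simpa using (tendsto_const_nhds (x := (1:ℝ))).sub hβ
        simpa using (tendsto_const_nhds (x := b)).mul h1
      exact this.eventually (eventually_gt_nhds hab)
    filter_upwards [hkn, hev2] with n hn hev
    have hrb := ratio_bounds μ hHpos hsupp hb0 hb1.le n (k n) hn
    have hch := chernoff μ (b * H) (k n) n
    rw [← hp, ← hq] at hch
    have : b * (1 - exp (k n) * q ^ n) ≤ b * (1 - ((iidMeasure μ n) {x : Fin n → ℝ |
        (Finset.univ.filter (fun i => b * H ≤ x i)).card ≤ k n}).toReal) := by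
      apply mul_le_mul_of_nonneg_left _ hb0.le
      linarith
    linarith [hrb.2]
  · intro a ha
    filter_upwards [hkn] with n hn
    have hrb := ratio_bounds μ hHpos hsupp (b := 1) one_pos le_rfl n (k n) hn
    linarith [hrb.1]
end

section
/- With the notation of the previous context, for n i.i.d. draws X_1,...,X_{2n} from D, the probability that the ratio X_{(2)}^{2n}/X_{(1)}^{2n} is at most t_n/t_{2n} is at least 1/8. -/
open MeasureTheory Filter Real
open scoped ENNReal

lemma le_kthLargest_one {n : ℕ} (x : Fin n → ℝ) (i : Fin n) : x i ≤ kthLargest x 1 := by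
  have hne : (Finset.univ : Finset (Fin n)).Nonempty := ⟨i, Finset.mem_univ i⟩
  apply le_csSup
  · refine ⟨Finset.univ.sup' hne x, ?_⟩
    rintro s hs
    simp only [Set.mem_setOf_eq] at hs
    obtain ⟨j, hj⟩ := Finset.card_pos.mp hs
    rw [Finset.mem_filter] at hj
    exact hj.2.trans (Finset.le_sup' x (Finset.mem_univ j))
  · show 1 ≤ _
    rw [Finset.one_le_card]
    exact ⟨i, Finset.mem_filter.mpr ⟨Finset.mem_univ i, le_refl _⟩⟩

lemma kthLargest_two_le {n : ℕ} (x : Fin n → ℝ) {c : ℝ} (hc : 0 ≤ c)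
    (i : Fin n) (h : ∀ j, j ≠ i → x j ≤ c) : kthLargest x 2 ≤ c := by
  apply Real.sSup_le _ hc
  intro s hs
  simp only [Set.mem_setOf_eq] at hs
  obtain ⟨a, ha, b, hb, hab⟩ := Finset.one_lt_card.mp (lt_of_lt_of_le one_lt_two hs)
  rcases ne_or_eq a i with h1 | rfl
  · exact le_trans (Finset.mem_filter.mp ha).2 (h a h1)
  · exact le_trans (Finset.mem_filter.mp hb).2 (h b (Ne.symm hab))

/-- the event that coordinate `i` is `≥ c` and all other coordinates lie in `[0, b]`. -/
def cell (N : ℕ) (b c : ℝ) (i : Fin N) : Set (Fin N → ℝ) :=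
  Set.univ.pi (fun j => if j = i then Set.Ici c else Set.Icc 0 b)

lemma cell_measurable {N : ℕ} {b c : ℝ} (i : Fin N) : MeasurableSet (cell N b c i) := by
  apply MeasurableSet.univ_pi
  intro j
  by_cases h : j = i <;> simp [cell, h]

lemma cell_disjoint {N : ℕ} {b c : ℝ} (h : b < c) :
    Pairwise (Function.onFun Disjoint (cell N b c)) := by
  intro i j hij
  rw [Function.onFun, Set.disjoint_left]
  intro x hxi hxj
  have h1 : c ≤ x i := by simpa using hxi i (Set.mem_univ i)
  have h2 : x i ≤ b := by
    have := hxj i (Set.mem_univ i)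
    simp only [if_neg hij] at this
    exact this.2
  linarith

lemma cell_measure {N : ℕ} (hN : 1 ≤ N) (μ : Measure ℝ) [IsProbabilityMeasure μ]
    (b c : ℝ) (i : Fin N) :
    Measure.pi (fun _ : Fin N => μ) (cell N b c i) =
      μ (Set.Ici c) * μ (Set.Icc 0 b) ^ (N - 1) := by
  rw [cell, Measure.pi_pi, ← Finset.mul_prod_erase Finset.univ _ (Finset.mem_univ i)]
  rw [if_pos rfl]
  congr 1
  rw [Finset.prod_congr rfl (fun j hj => by rw [if_neg (Finset.ne_of_mem_erase hj)]),
    Finset.prod_const, Finset.card_erase_of_mem (Finset.mem_univ i), Finset.card_univ,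
    Fintype.card_fin]

theorem stmt2 (μ : Measure ℝ) [IsProbabilityMeasure μ] (hpos : μ (Set.Iio 0) = 0)
    (hcont : ∀ a : ℝ, μ {a} = 0)
    (t : ℕ → ℝ)
    (ht : ∀ r : ℕ, 1 ≤ r → ((μ (Set.Iic (t r))).toReal) ^ r = 1 / 2)
    (n : ℕ) (hn : 1 ≤ n) :
    (1 / 8 : ℝ≥0∞) ≤
      iidMeasure μ (2 * n) {x | kthLargest x 2 / kthLargest x 1 ≤ t n / t (2 * n)} := by
  set N := 2 * n with hN
  have hNn : 1 ≤ N := by omega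
  have hn0 : (n : ℝ) ≠ 0 := by
    exact_mod_cast (by omega : n ≠ 0)
  have hn1 : (1:ℝ) ≤ (n:ℝ) := by exact_mod_cast hn
  set p := (μ (Set.Iic (t n))).toReal with hpdef
  set q := (μ (Set.Iic (t N))).toReal with hqdef
  have hp : p ^ n = 1 / 2 := ht n hn
  have hq : q ^ N = 1 / 2 := ht N hNn
  have hp0 : 0 ≤ p := ENNReal.toReal_nonneg
  have hq0 : 0 ≤ q := ENNReal.toReal_nonneg
  have hp1 : p ≤ 1 := by
    calc p ≤ (1:ℝ≥0∞).toReal := ENNReal.toReal_mono ENNReal.one_ne_top prob_le_one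
      _ = 1 := by simp
  -- positivity of the medians
  have htpos : ∀ r : ℕ, 1 ≤ r → ((μ (Set.Iic (t r))).toReal) ^ r = 1/2 → 0 < t r := by
    intro r hr hrt
    by_contra hle
    push_neg at hle
    have hsub : Set.Iic (t r) ⊆ Set.Iio 0 ∪ {t r} := by
      intro y hy
      rcases eq_or_lt_of_le (Set.mem_Iic.mp hy) with h | h
      · exact Or.inr h
      · exact Or.inl (lt_of_lt_of_le h hle)
    have hz : μ (Set.Iic (t r)) = 0 := by
      refine le_antisymm (le_trans (measure_mono hsub) ?_) zero_le
      refine le_trans (measure_union_le _ _) ?_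
      rw [hpos, hcont]
      simp
    rw [hz] at hrt
    simp only [ENNReal.toReal_zero, zero_pow (by omega : r ≠ 0)] at hrt
    norm_num at hrt
  have htn : 0 < t n := htpos n hn hp
  have htN : 0 < t N := htpos N hNn hq
  have hpN : p ^ N = 1/4 := by
    rw [show N = n * 2 by omega, pow_mul, hp]
    norm_num
  have htlt : t n < t N := by
    by_contra hc
    push_neg at hc
    have h1 : q ≤ p :=
      ENNReal.toReal_mono (measure_ne_top μ _) (measure_mono (Set.Iic_subset_Iic.mpr hc))
    have h2 : q ^ N ≤ p ^ N := pow_le_pow_left₀ hq0 h1 N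
    rw [hq, hpN] at h2
    norm_num at h2
  -- Bernoulli bound giving q ≤ 1 - 1/(4n)
  have h4n : (0:ℝ) < 4*(n:ℝ) := by positivity
  have hfrac : (0:ℝ) < 1/(4*(n:ℝ)) := by positivity
  have hquarter : 1/(4*(n:ℝ)) ≤ 1 := by rw [div_le_one h4n]; linarith
  have hber : (1:ℝ)/2 ≤ (1 + -(1/(4*(n:ℝ)))) ^ N := by
    have h := one_add_mul_le_pow (by linarith : (-2:ℝ) ≤ -(1/(4*(n:ℝ)))) N
    have e : (1:ℝ) + N * -(1/(4*(n:ℝ))) = 1/2 := by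
      rw [hN]; push_cast; field_simp; ring
    linarith
  have hqle : q ≤ 1 + -(1/(4*(n:ℝ))) := by
    apply le_of_pow_le_pow_left₀ (by omega : N ≠ 0) (by linarith : (0:ℝ) ≤ 1 + -(1/(4*(n:ℝ))))
    rw [hq]; exact hber
  have h1q : 1/(4*(n:ℝ)) ≤ 1 - q := by linarith
  -- main real inequality
  have hpow : (1:ℝ)/4 ≤ p ^ (N - 1) := by
    have h1 : p ^ N ≤ p ^ (N-1) := pow_le_pow_of_le_one hp0 hp1 (by omega)
    linarith [hpN ▸ h1]
  have hkey : (1:ℝ)/8 ≤ (N:ℝ) * ((1 - q) * p ^ (N-1)) := by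
    have h2 : (1/(4*(n:ℝ))) * (1/4) ≤ (1 - q) * p ^ (N-1) :=
      mul_le_mul h1q hpow (by norm_num) (by linarith)
    have h3 : (N:ℝ) * ((1/(4*(n:ℝ))) * (1/4)) = 1/8 := by
      rw [hN]; push_cast; field_simp; ring
    calc (1:ℝ)/8 = (N:ℝ) * ((1/(4*(n:ℝ))) * (1/4)) := h3.symm
      _ ≤ (N:ℝ) * ((1 - q) * p ^ (N-1)) := by
          apply mul_le_mul_of_nonneg_left h2 (by positivity)
  -- measure-theoretic bounds
  have hIci : 1 - μ (Set.Iic (t N)) ≤ μ (Set.Ici (t N)) := by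
    rw [tsub_le_iff_left]
    calc (1:ℝ≥0∞) = μ Set.univ := measure_univ.symm
      _ = μ (Set.Iic (t N) ∪ Set.Ici (t N)) := by rw [Set.Iic_union_Ici]
      _ ≤ μ (Set.Iic (t N)) + μ (Set.Ici (t N)) := measure_union_le _ _
  have hIcc : μ (Set.Iic (t n)) ≤ μ (Set.Icc 0 (t n)) := by
    calc μ (Set.Iic (t n)) ≤ μ (Set.Iio 0 ∪ Set.Icc 0 (t n)) := by
          refine measure_mono (fun y hy => ?_)
          rcases lt_or_ge y 0 with h | h
          · exact Or.inl h
          · exact Or.inr ⟨h, hy⟩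
      _ ≤ μ (Set.Iio 0) + μ (Set.Icc 0 (t n)) := measure_union_le _ _
      _ = μ (Set.Icc 0 (t n)) := by rw [hpos, zero_add]
  have hofp : ENNReal.ofReal p = μ (Set.Iic (t n)) := ENNReal.ofReal_toReal (measure_ne_top μ _)
  have hofq : ENNReal.ofReal q = μ (Set.Iic (t N)) := ENNReal.ofReal_toReal (measure_ne_top μ _)
  have hchain : (1/8 : ℝ≥0∞) ≤ (N : ℝ≥0∞) * (μ (Set.Ici (t N)) * μ (Set.Icc 0 (t n)) ^ (N-1)) := by
    calc (1/8 : ℝ≥0∞) = ENNReal.ofReal (1/8) := by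
          rw [ENNReal.ofReal_div_of_pos (by norm_num), ENNReal.ofReal_one, ENNReal.ofReal_ofNat]
      _ ≤ ENNReal.ofReal ((N:ℝ) * ((1 - q) * p ^ (N-1))) := ENNReal.ofReal_le_ofReal hkey
      _ = (N : ℝ≥0∞) * ((1 - ENNReal.ofReal q) * (ENNReal.ofReal p) ^ (N-1)) := by
          rw [ENNReal.ofReal_mul (by positivity), ENNReal.ofReal_mul (by linarith),
            ENNReal.ofReal_pow hp0, ENNReal.ofReal_sub _ hq0, ENNReal.ofReal_one,
            ENNReal.ofReal_natCast]
      _ ≤ (N : ℝ≥0∞) * (μ (Set.Ici (t N)) * μ (Set.Icc 0 (t n)) ^ (N-1)) := by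
          rw [hofq, hofp]
          exact mul_le_mul_right (mul_le_mul' hIci (pow_le_pow_left' hIcc _)) _
  -- the union of cells and its measure
  have hunion : iidMeasure μ N (⋃ i, cell N (t n) (t N) i) =
      (N : ℝ≥0∞) * (μ (Set.Ici (t N)) * μ (Set.Icc 0 (t n)) ^ (N-1)) := by
    rw [iidMeasure, measure_iUnion (cell_disjoint htlt) (fun i => cell_measurable i)]
    rw [tsum_fintype]
    simp only [cell_measure hNn μ (t n) (t N)]
    rw [Finset.sum_const, Finset.card_univ, Fintype.card_fin, nsmul_eq_mul]
  have hsub : (⋃ i, cell N (t n) (t N) i) ⊆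
      {x : Fin N → ℝ | kthLargest x 2 / kthLargest x 1 ≤ t n / t N} := by
    rw [Set.iUnion_subset_iff]
    intro i x hx
    simp only [cell, Set.mem_pi, Set.mem_univ, true_implies] at hx
    have hxi : t N ≤ x i := by simpa using hx i
    have hxj : ∀ j, j ≠ i → x j ∈ Set.Icc 0 (t n) := fun j hj => by simpa [hj] using hx j
    have h1 : t N ≤ kthLargest x 1 := le_trans hxi (le_kthLargest_one x i)
    have h2 : kthLargest x 2 ≤ t n := kthLargest_two_le x (le_of_lt htn) i
      (fun j hj => (hxj j hj).2)
    exact Set.mem_setOf_eq ▸ div_le_div₀ (le_of_lt htn) h2 htN h1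
  calc (1/8 : ℝ≥0∞) ≤ (N : ℝ≥0∞) * (μ (Set.Ici (t N)) * μ (Set.Icc 0 (t n)) ^ (N-1)) := hchain
    _ = iidMeasure μ N (⋃ i, cell N (t n) (t N) i) := hunion.symm
    _ ≤ iidMeasure μ N {x | kthLargest x 2 / kthLargest x 1 ≤ t n / t N} :=
        measure_mono hsub
end

section
/- If for every constant l ∈ ℕ it holds that lim_{n→∞} t_n / t_{nl} = 1, where t_r is the median of the maximum of r i.i.d. draws from distribution D, then lim_{n→∞} E[X_{(2)}^n / X_{(1)}^n] = 1. -/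
open MeasureTheory Filter Real

namespace Stmt4Aux

open Finset

lemma kth1_eq {n : ℕ} (h : (Finset.univ : Finset (Fin n)).Nonempty) (x : Fin n → ℝ) :
    kthLargest x 1 = Finset.univ.sup' h x := by
  have hset : {t : ℝ | 1 ≤ (Finset.univ.filter (fun i => t ≤ x i)).card}
      = Set.Iic (Finset.univ.sup' h x) := by
    ext t
    simp only [Set.mem_setOf_eq, Set.mem_Iic, Finset.le_sup'_iff]
    constructor
    · intro h2
      obtain ⟨b, hb⟩ := Finset.card_pos.mp h2
      exact ⟨b, Finset.mem_univ _, (Finset.mem_filter.mp hb).2⟩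
    · rintro ⟨b, _, hb⟩
      exact Finset.card_pos.mpr ⟨b, Finset.mem_filter.mpr ⟨Finset.mem_univ _, hb⟩⟩
  rw [kthLargest, hset, csSup_Iic]

lemma kth2_eq {n : ℕ} (h : (Finset.univ.offDiag : Finset (Fin n × Fin n)).Nonempty)
    (x : Fin n → ℝ) :
    kthLargest x 2 = Finset.univ.offDiag.sup' h (fun p => min (x p.1) (x p.2)) := by
  have hset : {t : ℝ | 2 ≤ (Finset.univ.filter (fun i => t ≤ x i)).card}
      = Set.Iic (Finset.univ.offDiag.sup' h (fun p => min (x p.1) (x p.2))) := by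
    ext t
    simp only [Set.mem_setOf_eq, Set.mem_Iic, Finset.le_sup'_iff]
    constructor
    · intro h2
      obtain ⟨a, ha, b, hb, hab⟩ := Finset.one_lt_card.mp h2
      exact ⟨(a, b), Finset.mem_offDiag.mpr ⟨Finset.mem_univ _, Finset.mem_univ _, hab⟩,
        le_min (Finset.mem_filter.mp ha).2 (Finset.mem_filter.mp hb).2⟩
    · rintro ⟨⟨a, b⟩, hab, hmin⟩
      have hab' := Finset.mem_offDiag.mp hab
      have : 1 < (Finset.univ.filter (fun i => t ≤ x i)).card :=
        Finset.one_lt_card.mpr ⟨a, Finset.mem_filter.mpr ⟨Finset.mem_univ _,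
            le_trans hmin (min_le_left _ _)⟩,
          b, Finset.mem_filter.mpr ⟨Finset.mem_univ _, le_trans hmin (min_le_right _ _)⟩,
          hab'.2.2⟩
      exact this
  rw [kthLargest, hset, csSup_Iic]

lemma kth2_le_kth1 {n : ℕ} (h : (Finset.univ.offDiag : Finset (Fin n × Fin n)).Nonempty)
    (x : Fin n → ℝ) : kthLargest x 2 ≤ kthLargest x 1 := by
  have h1 : (Finset.univ : Finset (Fin n)).Nonempty := by
    obtain ⟨p, _⟩ := h
    exact ⟨p.1, Finset.mem_univ _⟩
  rw [kth1_eq h1, kth2_eq h]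
  exact Finset.sup'_le _ _ fun p _ =>
    le_trans (min_le_left _ _) (Finset.le_sup' x (Finset.mem_univ p.1))

lemma prod_ite_measure {M : Type*} [CommMonoid M] {n : ℕ} (i : Fin n) (c d : M) :
    ∏ j : Fin n, (if j = i then c else d) = c * d ^ (n - 1) := by
  rw [← Finset.mul_prod_erase Finset.univ _ (Finset.mem_univ i), if_pos rfl]
  congr 1
  calc ∏ j ∈ Finset.univ.erase i, (if j = i then c else d)
      = ∏ _j ∈ Finset.univ.erase i, d :=
        Finset.prod_congr rfl fun j hj => by rw [if_neg (Finset.ne_of_mem_erase hj)]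
    _ = d ^ (n - 1) := by
        rw [Finset.prod_const, Finset.card_erase_of_mem (Finset.mem_univ i), Finset.card_univ,
          Fintype.card_fin]

lemma rpow_half_bound (c : ℝ) : 1 - c * Real.log 2 ≤ ((1:ℝ)/2) ^ c := by
  rw [show ((1:ℝ)/2) = 2⁻¹ by norm_num,
    Real.rpow_def_of_pos (by norm_num : (0:ℝ) < 2⁻¹), Real.log_inv]
  calc 1 - c * Real.log 2 = (-Real.log 2 * c) + 1 := by ring
    _ ≤ _ := Real.add_one_le_exp _

set_option maxHeartbeats 2000000 in
lemma core (μ : Measure ℝ) [IsProbabilityMeasure μ] (hpos : μ (Set.Iio 0) = 0)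
    (hcont : ∀ a : ℝ, μ {a} = 0)
    {n : ℕ} (hn : 2 ≤ n) {a s : ℝ} (ha : 0 < a) (hs : 0 < s)
    {δ1 δ2 : ℝ}
    (h1 : 1 - ((μ (Set.Iic s)).toReal) ^ n ≤ δ1)
    (h2 : ((μ (Set.Iic a)).toReal) ^ n
        + n * (1 - (μ (Set.Iic a)).toReal) * ((μ (Set.Iic a)).toReal) ^ (n - 1) ≤ δ2) :
    (a / s) * (1 - (δ1 + δ2)) ≤ ratioExp μ n 1 ∧ ratioExp μ n 1 ≤ 1 := by
  classical
  haveI : IsProbabilityMeasure (iidMeasure μ n) := by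
    rw [iidMeasure]; infer_instance
  set ν := iidMeasure μ n with hν
  have h1ne : (Finset.univ : Finset (Fin n)).Nonempty := ⟨⟨0, by omega⟩, Finset.mem_univ _⟩
  have hne01 : (⟨0, by omega⟩ : Fin n) ≠ ⟨1, by omega⟩ := by
    intro h
    exact absurd (congrArg Fin.val h) (by norm_num)
  have hodmem : ((⟨0, by omega⟩ : Fin n), (⟨1, by omega⟩ : Fin n)) ∈ Finset.univ.offDiag :=
    Finset.mem_offDiag.mpr ⟨Finset.mem_univ _, Finset.mem_univ _, hne01⟩
  have hod : (Finset.univ.offDiag : Finset (Fin n × Fin n)).Nonempty := ⟨_, hodmem⟩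
  -- measurability
  have hm1 : Measurable fun x : Fin n → ℝ => kthLargest x 1 := by
    have hmm : Measurable (Finset.univ.sup' h1ne (fun i (x : Fin n → ℝ) => x i)) :=
      Finset.measurable_sup' h1ne fun i _ => measurable_pi_apply i
    convert hmm using 1
    funext x
    rw [kth1_eq h1ne, Finset.sup'_apply]
  have hm2 : Measurable fun x : Fin n → ℝ => kthLargest x 2 := by
    have hmm : Measurable (Finset.univ.offDiag.sup'
        hod (fun p (x : Fin n → ℝ) => min (x p.1) (x p.2))) :=
      Finset.measurable_sup' hod fun p _ =>
        (measurable_pi_apply p.1).min (measurable_pi_apply p.2)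
    convert hmm using 1
    funext x
    rw [kth2_eq hod, Finset.sup'_apply]
  set f : (Fin n → ℝ) → ℝ := fun x => kthLargest x 2 / kthLargest x 1 with hf
  have hfm : Measurable f := hm2.div hm1
  have hre : ratioExp μ n 1 = ∫ x, f x ∂ν := by
    rw [ratioExp, hν, hf]
  -- a.e. coordinates nonneg
  have hcoord : ∀ i : Fin n, ν {x : Fin n → ℝ | x i < 0} = 0 := by
    intro i
    have hseteq : {x : Fin n → ℝ | x i < 0}
        = Set.univ.pi (fun j => if j = i then Set.Iio 0 else Set.univ) := by
      ext x
      simp only [Set.mem_setOf_eq, Set.mem_univ_pi]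
      constructor
      · intro hx j
        by_cases hji : j = i
        · subst hji; simp [hx]
        · simp [hji]
      · intro hx
        simpa using hx i
    rw [hν, iidMeasure, hseteq, Measure.pi_pi]
    exact Finset.prod_eq_zero (Finset.mem_univ i) (by simp [hpos])
  have hae : ∀ᵐ x ∂ν, ∀ i, 0 ≤ x i := by
    rw [ae_iff]
    have hsub : {x : Fin n → ℝ | ¬ ∀ i, 0 ≤ x i} ⊆ ⋃ i, {x | x i < 0} := by
      intro x hx
      push_neg at hx
      obtain ⟨i, hi⟩ := hx
      exact Set.mem_iUnion.mpr ⟨i, by simpa using hi⟩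
    exact measure_mono_null hsub (measure_iUnion_null hcoord)
  have hb : ∀ᵐ x ∂ν, 0 ≤ f x ∧ f x ≤ 1 := by
    filter_upwards [hae] with x hx
    have h2nn : 0 ≤ kthLargest x 2 := by
      rw [kth2_eq hod]
      exact le_trans (le_min (hx _) (hx _))
        (Finset.le_sup' (fun p : Fin n × Fin n => min (x p.1) (x p.2)) hodmem)
    have h21 := kth2_le_kth1 hod x
    rcases eq_or_lt_of_le (le_trans h2nn h21) with h10 | h10
    · refine ⟨?_, ?_⟩ <;> simp [hf, ← h10]
    · exact ⟨div_nonneg h2nn h10.le, (div_le_one h10).mpr h21⟩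
  have hint : Integrable f ν := by
    refine Integrable.mono' (integrable_const 1) hfm.aestronglyMeasurable ?_
    filter_upwards [hb] with x hx
    rw [Real.norm_eq_abs, abs_of_nonneg hx.1]
    exact hx.2
  have hupper : ratioExp μ n 1 ≤ 1 := by
    rw [hre]
    calc ∫ x, f x ∂ν ≤ ∫ _x, (1:ℝ) ∂ν :=
          integral_mono_ae hint (integrable_const 1) (hb.mono fun x hx => hx.2)
      _ = 1 := by simp
  refine ⟨?_, hupper⟩
  -- good event
  set G : Set (Fin n → ℝ) := {x | (∀ i, x i ≤ s) ∧ ∃ i j : Fin n, i ≠ j ∧ a ≤ x i ∧ a ≤ x j}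
    with hG
  have hA1meas : MeasurableSet {x : Fin n → ℝ | ∀ i, x i ≤ s} := by
    have hseteq : {x : Fin n → ℝ | ∀ i, x i ≤ s}
        = ⋂ i, (fun x : Fin n → ℝ => x i) ⁻¹' Set.Iic s := by
      ext x
      simp only [Set.mem_setOf_eq, Set.mem_iInter, Set.mem_preimage, Set.mem_Iic]
    rw [hseteq]
    exact MeasurableSet.iInter fun i => (measurable_pi_apply i) measurableSet_Iic
  have hA2meas : MeasurableSet {x : Fin n → ℝ | ∃ i j : Fin n, i ≠ j ∧ a ≤ x i ∧ a ≤ x j} := by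
    have hseteq : {x : Fin n → ℝ | ∃ i j : Fin n, i ≠ j ∧ a ≤ x i ∧ a ≤ x j}
        = ⋃ i, ⋃ j, ⋃ (_ : i ≠ j),
          ((fun x : Fin n → ℝ => x i) ⁻¹' Set.Ici a ∩ (fun x : Fin n → ℝ => x j) ⁻¹' Set.Ici a) := by
      ext x
      simp only [Set.mem_setOf_eq, Set.mem_iUnion, Set.mem_inter_iff, Set.mem_preimage,
        Set.mem_Ici]
      tauto
    rw [hseteq]
    exact MeasurableSet.iUnion fun i => MeasurableSet.iUnion fun j => MeasurableSet.iUnion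
      fun _ => ((measurable_pi_apply i) measurableSet_Ici).inter
        ((measurable_pi_apply j) measurableSet_Ici)
  have hGmeas : MeasurableSet G := by
    rw [hG, Set.setOf_and]
    exact hA1meas.inter hA2meas
  have hGlow : ∀ x ∈ G, a / s ≤ f x := by
    rintro x ⟨hxs, i, j, hij, hai, haj⟩
    have hx2 : a ≤ kthLargest x 2 := by
      rw [kth2_eq hod]
      exact le_trans (le_min hai haj)
        (Finset.le_sup' (fun p : Fin n × Fin n => min (x p.1) (x p.2))
          (show ((i, j) : Fin n × Fin n) ∈ Finset.univ.offDiag from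
            Finset.mem_offDiag.mpr ⟨Finset.mem_univ _, Finset.mem_univ _, hij⟩))
    have hx1s : kthLargest x 1 ≤ s := by
      rw [kth1_eq h1ne]
      exact Finset.sup'_le _ _ fun i _ => hxs i
    have h21 := kth2_le_kth1 hod x
    have hx1pos : 0 < kthLargest x 1 := lt_of_lt_of_le ha (le_trans hx2 h21)
    exact div_le_div₀ (le_trans ha.le hx2) hx2 hx1pos hx1s
  have hglef : (G.indicator fun _ => a / s) ≤ᵐ[ν] f := by
    filter_upwards [hb] with x hx
    by_cases hxG : x ∈ G
    · rw [Set.indicator_of_mem hxG]; exact hGlow x hxG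
    · rw [Set.indicator_of_notMem hxG]; exact hx.1
  have hglow : (a / s) * (ν G).toReal ≤ ratioExp μ n 1 := by
    have hig : Integrable (G.indicator fun _ => a / s) ν := (integrable_const _).indicator hGmeas
    have hmono := integral_mono_ae hig hint hglef
    rw [integral_indicator_const _ hGmeas] at hmono
    rw [hre]
    calc (a / s) * (ν G).toReal = (ν G).toReal • (a / s) := by rw [smul_eq_mul]; ring
      _ ≤ _ := hmono
  -- complement computations
  have hcompl : ∀ A : Set (Fin n → ℝ), MeasurableSet A →
      (ν A).toReal + (ν Aᶜ).toReal = 1 := by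
    intro A hA
    have hh := congrArg ENNReal.toReal (measure_add_measure_compl (μ := ν) hA)
    rwa [ENNReal.toReal_add (measure_ne_top _ _) (measure_ne_top _ _), measure_univ,
      ENNReal.toReal_one] at hh
  have hA1 : (ν {x : Fin n → ℝ | ∀ i, x i ≤ s}) = μ (Set.Iic s) ^ n := by
    have hseteq : {x : Fin n → ℝ | ∀ i, x i ≤ s} = Set.univ.pi fun _ => Set.Iic s := by
      ext x
      simp only [Set.mem_setOf_eq, Set.mem_univ_pi, Set.mem_Iic]
    rw [hν, iidMeasure, hseteq, Measure.pi_pi, Finset.prod_const, Finset.card_univ,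
      Fintype.card_fin]
  have hIio : ∀ b : ℝ, μ (Set.Iio b) = μ (Set.Iic b) := by
    intro b
    refine le_antisymm (measure_mono Set.Iio_subset_Iic_self) ?_
    calc μ (Set.Iic b) ≤ μ (Set.Iio b ∪ {b}) := by
          refine measure_mono fun y hy => ?_
          rcases lt_or_eq_of_le (Set.mem_Iic.mp hy) with h | h
          · exact Or.inl h
          · exact Or.inr (by simp [h])
      _ ≤ μ (Set.Iio b) + μ {b} := measure_union_le _ _
      _ = μ (Set.Iio b) := by rw [hcont b, add_zero]
  have hIci : (μ (Set.Ici a)).toReal = 1 - (μ (Set.Iic a)).toReal := by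
    have hh := congrArg ENNReal.toReal
      (measure_add_measure_compl (μ := μ) (measurableSet_Iio : MeasurableSet (Set.Iio a)))
    rw [ENNReal.toReal_add (measure_ne_top _ _) (measure_ne_top _ _), measure_univ,
      ENNReal.toReal_one, Set.compl_Iio, hIio] at hh
    linarith
  set C1 : Set (Fin n → ℝ) := {x | ¬ ∀ i, x i ≤ s} with hC1def
  have hC1 : (ν C1).toReal ≤ δ1 := by
    have hcc : {x : Fin n → ℝ | ∀ i, x i ≤ s}ᶜ = C1 := by
      ext x; simp [hC1def]
    have hsum := hcompl _ hA1meas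
    rw [hcc] at hsum
    have hA1' : (ν {x : Fin n → ℝ | ∀ i, x i ≤ s}).toReal = (μ (Set.Iic s)).toReal ^ n := by
      rw [hA1, ENNReal.toReal_pow]
    linarith
  set C2 : Set (Fin n → ℝ) := {x | ¬ ∃ i j : Fin n, i ≠ j ∧ a ≤ x i ∧ a ≤ x j} with hC2def
  have hC2sub : C2 ⊆ (Set.univ.pi fun _ => Set.Iio a) ∪
      ⋃ i : Fin n, Set.univ.pi (fun j => if j = i then Set.Ici a else Set.Iio a) := by
    intro x hx
    simp only [hC2def, Set.mem_setOf_eq] at hx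
    push_neg at hx
    by_cases hall : ∀ i, x i < a
    · exact Or.inl fun i _ => hall i
    · push_neg at hall
      obtain ⟨i, hi⟩ := hall
      refine Or.inr (Set.mem_iUnion.mpr ⟨i, fun j _ => ?_⟩)
      by_cases hji : j = i
      · simp [hji, hi]
      · simp only [if_neg hji, Set.mem_Iio]
        exact hx i j (Ne.symm hji) hi
  have hC2m : ν C2 ≤ μ (Set.Iic a) ^ n + (n : ℕ) • (μ (Set.Ici a) * μ (Set.Iic a) ^ (n - 1)) := by
    calc ν C2 ≤ ν ((Set.univ.pi fun _ => Set.Iio a) ∪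
          ⋃ i : Fin n, Set.univ.pi (fun j => if j = i then Set.Ici a else Set.Iio a)) :=
            measure_mono hC2sub
      _ ≤ ν (Set.univ.pi fun _ => Set.Iio a) +
          ν (⋃ i : Fin n, Set.univ.pi (fun j => if j = i then Set.Ici a else Set.Iio a)) :=
            measure_union_le _ _
      _ ≤ ν (Set.univ.pi fun _ => Set.Iio a) +
          ∑ i : Fin n, ν (Set.univ.pi (fun j => if j = i then Set.Ici a else Set.Iio a)) :=
            add_le_add le_rfl (measure_iUnion_fintype_le _ _)
      _ = μ (Set.Iic a) ^ n + (n : ℕ) • (μ (Set.Ici a) * μ (Set.Iic a) ^ (n - 1)) := by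
          have e1 : ν (Set.univ.pi fun _ => Set.Iio a) = μ (Set.Iic a) ^ n := by
            rw [hν, iidMeasure, Measure.pi_pi, hIio, Finset.prod_const, Finset.card_univ,
              Fintype.card_fin]
          have e2 : ∀ i : Fin n,
              ν (Set.univ.pi (fun j => if j = i then Set.Ici a else Set.Iio a))
              = μ (Set.Ici a) * μ (Set.Iic a) ^ (n - 1) := by
            intro i
            rw [hν, iidMeasure, Measure.pi_pi]
            have : ∀ j : Fin n, μ (if j = i then Set.Ici a else Set.Iio a)
                = if j = i then μ (Set.Ici a) else μ (Set.Iio a) := by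
              intro j
              by_cases h : j = i <;> simp [h]
            rw [Finset.prod_congr rfl fun j _ => this j, prod_ite_measure i, hIio]
          rw [e1, Finset.sum_congr rfl fun i _ => e2 i, Finset.sum_const, Finset.card_univ,
            Fintype.card_fin]
  have hC2r : (ν C2).toReal ≤ δ2 := by
    have hfin : (μ (Set.Iic a) ^ n + (n : ℕ) • (μ (Set.Ici a) * μ (Set.Iic a) ^ (n - 1))) ≠ ⊤ := by
      refine ENNReal.add_ne_top.mpr ⟨ENNReal.pow_ne_top (measure_ne_top _ _), ?_⟩
      rw [nsmul_eq_mul]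
      exact ENNReal.mul_ne_top (ENNReal.natCast_ne_top n)
        (ENNReal.mul_ne_top (measure_ne_top _ _) (ENNReal.pow_ne_top (measure_ne_top _ _)))
    have hmon := ENNReal.toReal_mono hfin hC2m
    rw [ENNReal.toReal_add (ENNReal.pow_ne_top (measure_ne_top _ _)) (by
        rw [nsmul_eq_mul]
        exact ENNReal.mul_ne_top (ENNReal.natCast_ne_top n)
          (ENNReal.mul_ne_top (measure_ne_top _ _) (ENNReal.pow_ne_top (measure_ne_top _ _)))),
      ENNReal.toReal_pow, nsmul_eq_mul, ENNReal.toReal_mul, ENNReal.toReal_mul,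
      ENNReal.toReal_natCast, ENNReal.toReal_pow, hIci] at hmon
    refine le_trans hmon (le_trans (le_of_eq (by ring)) h2)
  have hGc : (ν Gᶜ).toReal ≤ δ1 + δ2 := by
    have hsub : Gᶜ ⊆ C1 ∪ C2 := by
      intro x hx
      rw [Set.mem_compl_iff, hG, Set.mem_setOf_eq, not_and_or] at hx
      rcases hx with hx | hx
      · exact Or.inl hx
      · exact Or.inr hx
    have hle : ν Gᶜ ≤ ν C1 + ν C2 := le_trans (measure_mono hsub) (measure_union_le _ _)
    have hle' := ENNReal.toReal_mono (ENNReal.add_ne_top.mpr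
      ⟨measure_ne_top _ _, measure_ne_top _ _⟩) hle
    rw [ENNReal.toReal_add (measure_ne_top _ _) (measure_ne_top _ _)] at hle'
    linarith
  have hGr : 1 - (δ1 + δ2) ≤ (ν G).toReal := by
    have := hcompl G hGmeas
    linarith
  calc (a / s) * (1 - (δ1 + δ2)) ≤ (a / s) * (ν G).toReal :=
        mul_le_mul_of_nonneg_left hGr (by positivity)
    _ ≤ ratioExp μ n 1 := hglow
end Stmt4Aux

open Stmt4Aux in
set_option maxHeartbeats 2000000 in
theorem stmt4 (μ : Measure ℝ) [IsProbabilityMeasure μ] (hpos : μ (Set.Iio 0) = 0)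
    (hcont : ∀ a : ℝ, μ {a} = 0)
    (t : ℕ → ℝ)
    (ht : ∀ r : ℕ, 1 ≤ r → ((μ (Set.Iic (t r))).toReal) ^ r = 1 / 2)
    (htmin : ∀ r : ℕ, 1 ≤ r → ∀ s : ℝ, ((μ (Set.Iic s)).toReal) ^ r = 1 / 2 → t r ≤ s)
    (hlim : ∀ l : ℕ, 1 ≤ l → Tendsto (fun n : ℕ => t n / t (n * l)) atTop (nhds 1)) :
    Tendsto (fun n : ℕ => ratioExp μ n 1) atTop (nhds 1) := by
  -- basic facts about the cdf at the medians
  have hF0 : (μ (Set.Iic (0:ℝ))).toReal = 0 := by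
    have h1 : μ (Set.Iic (0:ℝ)) ≤ μ (Set.Iio 0) + μ {0} := by
      refine le_trans (measure_mono fun y hy => ?_) (measure_union_le _ _)
      rcases lt_or_eq_of_le (Set.mem_Iic.mp hy) with h | h
      · exact Or.inl h
      · exact Or.inr (by simp [h])
    rw [hpos, hcont, add_zero] at h1
    simp [le_antisymm h1 zero_le]
  have htpos : ∀ r : ℕ, 1 ≤ r → 0 < t r := by
    intro r hr
    by_contra h
    push_neg at h
    have hmono : μ (Set.Iic (t r)) ≤ μ (Set.Iic (0:ℝ)) :=
      measure_mono (Set.Iic_subset_Iic.mpr h)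
    have h0 : (μ (Set.Iic (t r))).toReal = 0 := by
      have h0' : (μ (Set.Iic (t r))).toReal ≤ (μ (Set.Iic (0:ℝ))).toReal :=
        ENNReal.toReal_mono (measure_ne_top _ _) hmono
      have h0'' : 0 ≤ (μ (Set.Iic (t r))).toReal := ENNReal.toReal_nonneg
      rw [hF0] at h0'
      linarith
    have hcontr := ht r hr
    rw [h0, zero_pow (by omega)] at hcontr
    norm_num at hcontr
  have hFval : ∀ r : ℕ, 1 ≤ r →
      (μ (Set.Iic (t r))).toReal = ((1:ℝ)/2) ^ ((r:ℝ)⁻¹) := by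
    intro r hr
    have h := ht r hr
    have hnn : (0:ℝ) ≤ (μ (Set.Iic (t r))).toReal := ENNReal.toReal_nonneg
    have key : (((μ (Set.Iic (t r))).toReal ^ r : ℝ)) ^ ((r:ℝ)⁻¹)
        = (μ (Set.Iic (t r))).toReal := by
      rw [← Real.rpow_natCast ((μ (Set.Iic (t r))).toReal) r, ← Real.rpow_mul hnn,
        mul_inv_cancel₀ (by positivity : ((r:ℝ)) ≠ 0), Real.rpow_one]
    rw [← key, h]
  have hFpow : ∀ r : ℕ, 1 ≤ r → ∀ p : ℕ,
      (μ (Set.Iic (t r))).toReal ^ p = ((1:ℝ)/2) ^ ((p:ℝ)/(r:ℝ)) := by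
    intro r hr p
    rw [hFval r hr, ← Real.rpow_natCast (((1:ℝ)/2) ^ ((r:ℝ)⁻¹)) p,
      ← Real.rpow_mul (by norm_num), inv_mul_eq_div]
  have hrmono : ∀ u v : ℝ, u ≤ v → ((1:ℝ)/2) ^ v ≤ ((1:ℝ)/2) ^ u := fun u v h =>
    Real.rpow_le_rpow_of_exponent_ge (by norm_num) (by norm_num) h
  have hlog2 : Real.log 2 ≤ 1 := by
    have := Real.log_two_lt_d9
    linarith
  have hlog2pos : 0 < Real.log 2 := Real.log_pos one_lt_two
  -- main argument
  rw [Metric.tendsto_atTop]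
  intro ε hε
  set ε' := min ε 1 with hε'def
  have hε'pos : 0 < ε' := lt_min hε one_pos
  have hε'le1 : ε' ≤ 1 := min_le_right _ _
  have hε'leε : ε' ≤ ε := min_le_left _ _
  -- choose j
  obtain ⟨j, hj1, hjb⟩ : ∃ j : ℕ, 1 ≤ j ∧ (1 + 4 * (j:ℝ)) * ((1:ℝ)/2) ^ (j:ℕ) ≤ ε' / 4 := by
    have a1 : Tendsto (fun j : ℕ => ((1:ℝ)/2) ^ j) atTop (nhds 0) :=
      tendsto_pow_atTop_nhds_zero_of_lt_one (by norm_num) (by norm_num)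
    have a2 : Tendsto (fun j : ℕ => (j:ℝ) * ((1:ℝ)/2) ^ j) atTop (nhds 0) :=
      tendsto_self_mul_const_pow_of_lt_one (by norm_num) (by norm_num)
    have h := a1.add (a2.const_mul 4)
    rw [show (0:ℝ) + 4 * 0 = 0 by ring] at h
    have ht1 : Tendsto (fun j : ℕ => (1 + 4 * (j:ℝ)) * ((1:ℝ)/2) ^ j) atTop (nhds 0) :=
      h.congr fun jj => by ring
    have h2 := ht1.eventually (gt_mem_nhds (show (0:ℝ) < ε'/4 by positivity))
    obtain ⟨j, hj⟩ := (h2.and (eventually_ge_atTop 1)).exists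
    exact ⟨j, hj.2, hj.1.le⟩
  -- choose k
  obtain ⟨k, hk1, hkb⟩ : ∃ k : ℕ, 1 ≤ k ∧ Real.log 2 / (k:ℝ) ≤ ε' / 4 := by
    obtain ⟨k, hk⟩ := exists_nat_gt (4 * Real.log 2 / ε')
    refine ⟨max k 1, le_max_right _ _, ?_⟩
    have hkk : (k:ℝ) ≤ ((max k 1 : ℕ) : ℝ) := by
      exact_mod_cast le_max_left k 1
    have hKpos : (0:ℝ) < ((max k 1 : ℕ) : ℝ) := by
      have : (1:ℕ) ≤ max k 1 := le_max_right _ _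
      exact_mod_cast lt_of_lt_of_le zero_lt_one this
    have hk' : 4 * Real.log 2 < ((max k 1 : ℕ) : ℝ) * ε' := by
      have := (div_lt_iff₀ hε'pos).mp hk
      nlinarith
    rw [div_le_iff₀ hKpos]
    nlinarith
  have hjpos : 0 < j := hj1
  have hkpos : 0 < k := hk1
  have hL : 1 ≤ 2 * j * k := Nat.mul_pos (Nat.mul_pos two_pos hjpos) hkpos
  have hdiv : Tendsto (fun n : ℕ => n / j) atTop atTop := by
    refine tendsto_atTop_atTop.mpr fun b => ⟨b * j + j, fun n hn => ?_⟩
    exact (Nat.le_div_iff_mul_le hjpos).mpr (by omega)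
  have hcomp : Tendsto (fun n : ℕ => t (n / j) / t ((n / j) * (2 * j * k))) atTop (nhds 1) :=
    (hlim (2 * j * k) hL).comp hdiv
  have hev1 : ∀ᶠ n : ℕ in atTop, 1 - ε'/4 < t (n / j) / t ((n / j) * (2 * j * k)) :=
    hcomp.eventually (lt_mem_nhds (show 1 - ε'/4 < 1 by linarith))
  have hev2 : ∀ᶠ n : ℕ in atTop, 2 * j ≤ n := eventually_ge_atTop _
  obtain ⟨N, hN⟩ := eventually_atTop.mp (hev1.and hev2)
  refine ⟨N, fun n hn => ?_⟩
  obtain ⟨hc, hnj⟩ := hN n hn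
  set m := n / j with hm
  set M := m * (2 * j * k) with hM
  have hm1 : 1 ≤ m := (Nat.one_le_div_iff hjpos).mpr (by omega)
  have hmjn : m * j ≤ n := Nat.div_mul_le_self n j
  have hnlt : n < (m + 1) * j := by
    have h1 := Nat.div_add_mod n j
    have h2 := Nat.mod_lt n hjpos
    rw [← hm] at h1
    calc n = j * m + n % j := h1.symm
      _ < j * m + j := Nat.add_lt_add_left h2 _
      _ = (m + 1) * j := by ring
  have hn2mj : n ≤ 2 * m * j :=
    le_of_lt (lt_of_lt_of_le hnlt (Nat.mul_le_mul_right j (by omega)))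
  have hM1 : 1 ≤ M := Nat.mul_pos hm1 hL
  have hn2 : 2 ≤ n := by omega
  have hta : 0 < t m := htpos m hm1
  have hts : 0 < t M := htpos M hM1
  have hmpos : (0:ℝ) < (m:ℝ) := by exact_mod_cast hm1
  have hMpos : (0:ℝ) < (M:ℝ) := by exact_mod_cast hM1
  have hkRpos : (0:ℝ) < (k:ℝ) := by exact_mod_cast hkpos
  -- δ1 bound
  have hδ1 : 1 - (μ (Set.Iic (t M))).toReal ^ n ≤ ε' / 4 := by
    have h1 : (μ (Set.Iic (t M))).toReal ^ n = ((1:ℝ)/2) ^ ((n:ℝ)/(M:ℝ)) := hFpow M hM1 n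
    have hMle : n * k ≤ M := by
      calc n * k ≤ (2 * m * j) * k := Nat.mul_le_mul_right k hn2mj
        _ = M := by rw [hM]; ring
    have h2 : (n:ℝ)/(M:ℝ) ≤ 1/(k:ℝ) := by
      rw [div_le_div_iff₀ hMpos hkRpos]
      have hcst : ((n * k : ℕ) : ℝ) ≤ (M : ℝ) := by exact_mod_cast hMle
      push_cast at hcst
      linarith
    have h3 : ((1:ℝ)/2) ^ ((1:ℝ)/(k:ℝ)) ≤ ((1:ℝ)/2) ^ ((n:ℝ)/(M:ℝ)) := hrmono _ _ h2
    have h4 := rpow_half_bound ((1:ℝ)/(k:ℝ))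
    have h5 : (1:ℝ)/(k:ℝ) * Real.log 2 = Real.log 2 / (k:ℝ) := by ring
    rw [h1]
    linarith
  -- δ2 bound
  have hFa1 : (μ (Set.Iic (t m))).toReal ≤ 1 := by
    rw [hFval m hm1]
    exact Real.rpow_le_one (by norm_num) (by norm_num) (by positivity)
  have hFann : (0:ℝ) ≤ (μ (Set.Iic (t m))).toReal := ENNReal.toReal_nonneg
  have hδ2 : (μ (Set.Iic (t m))).toReal ^ n
      + n * (1 - (μ (Set.Iic (t m))).toReal) * (μ (Set.Iic (t m))).toReal ^ (n - 1)
      ≤ ε' / 4 := by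
    have e1 : (μ (Set.Iic (t m))).toReal ^ n = ((1:ℝ)/2) ^ ((n:ℝ)/(m:ℝ)) := hFpow m hm1 n
    have e2 : (μ (Set.Iic (t m))).toReal ^ (n-1) = ((1:ℝ)/2) ^ (((n-1:ℕ):ℝ)/(m:ℝ)) :=
      hFpow m hm1 (n-1)
    have hcast : ((n-1:ℕ):ℝ) = (n:ℝ) - 1 := by
      rw [Nat.cast_sub (by omega : 1 ≤ n), Nat.cast_one]
    have hmjR : (m:ℝ) * (j:ℝ) ≤ (n:ℝ) := by exact_mod_cast hmjn
    have hnR : (n:ℝ) ≤ 2 * (m:ℝ) * (j:ℝ) := by exact_mod_cast hn2mj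
    -- first term
    have b1 : ((1:ℝ)/2) ^ ((n:ℝ)/(m:ℝ)) ≤ ((1:ℝ)/2) ^ ((j:ℝ)) := by
      apply hrmono
      rw [le_div_iff₀ hmpos]
      nlinarith
    have b1' : ((1:ℝ)/2) ^ ((j:ℝ)) = ((1:ℝ)/2) ^ (j:ℕ) := Real.rpow_natCast _ j
    -- second factor: 1 - Fa ≤ log 2 / m
    have b2 : 1 - (μ (Set.Iic (t m))).toReal ≤ Real.log 2 / (m:ℝ) := by
      have h4 := rpow_half_bound ((m:ℝ)⁻¹)
      rw [← hFval m hm1] at h4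
      have : (m:ℝ)⁻¹ * Real.log 2 = Real.log 2 / (m:ℝ) := by ring
      linarith
    -- third: Fa^{n-1} ≤ 2 * (1/2)^j
    have hmR1 : (1:ℝ) ≤ (m:ℝ) := by exact_mod_cast hm1
    have b3 : (μ (Set.Iic (t m))).toReal ^ (n-1) ≤ 2 * ((1:ℝ)/2) ^ (j:ℕ) := by
      rw [e2, hcast]
      have hexp : (j:ℝ) - 1 ≤ ((n:ℝ) - 1)/(m:ℝ) := by
        rw [le_div_iff₀ hmpos]
        nlinarith [hmjR, hmR1]
      have heq : ((1:ℝ)/2) ^ ((j:ℝ) - 1) = 2 * ((1:ℝ)/2) ^ (j:ℕ) := by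
        rw [Real.rpow_sub (by norm_num), Real.rpow_one, Real.rpow_natCast]
        ring
      calc ((1:ℝ)/2) ^ (((n:ℝ) - 1)/(m:ℝ)) ≤ ((1:ℝ)/2) ^ ((j:ℝ) - 1) := hrmono _ _ hexp
        _ = 2 * ((1:ℝ)/2) ^ (j:ℕ) := heq
    -- n * (1 - Fa) ≤ 2 * j * log 2
    have b4 : (n:ℝ) * (1 - (μ (Set.Iic (t m))).toReal) ≤ 2 * (j:ℝ) * Real.log 2 := by
      have hnn : (0:ℝ) ≤ (n:ℝ) := by positivity
      calc (n:ℝ) * (1 - (μ (Set.Iic (t m))).toReal) ≤ (n:ℝ) * (Real.log 2 / (m:ℝ)) :=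
            mul_le_mul_of_nonneg_left b2 hnn
        _ ≤ 2 * (j:ℝ) * Real.log 2 := by
            rw [mul_div_assoc']
            rw [div_le_iff₀ hmpos]
            nlinarith [mul_le_mul_of_nonneg_right hnR hlog2pos.le]
    have t1 : (μ (Set.Iic (t m))).toReal ^ n ≤ ((1:ℝ)/2) ^ (j:ℕ) := by
      rw [e1, ← b1']
      exact b1
    have hb4nn : (0:ℝ) ≤ 2 * (j:ℝ) * Real.log 2 := by positivity
    have t2 : (n:ℝ) * (1 - (μ (Set.Iic (t m))).toReal) * (μ (Set.Iic (t m))).toReal ^ (n-1)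
        ≤ (2 * (j:ℝ) * Real.log 2) * (2 * ((1:ℝ)/2) ^ (j:ℕ)) :=
      mul_le_mul b4 b3 (pow_nonneg hFann _) hb4nn
    have hp : (0:ℝ) ≤ ((1:ℝ)/2) ^ (j:ℕ) := by positivity
    have hfinal2 : (μ (Set.Iic (t m))).toReal ^ n
        + n * (1 - (μ (Set.Iic (t m))).toReal) * (μ (Set.Iic (t m))).toReal ^ (n - 1)
        ≤ (1 + 4 * (j:ℝ)) * ((1:ℝ)/2) ^ (j:ℕ) := by
      nlinarith [t1, t2,
        mul_nonneg (mul_nonneg (show (0:ℝ) ≤ (j:ℝ) by positivity) hp)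
          (show (0:ℝ) ≤ 1 - Real.log 2 by linarith)]
    linarith
  -- apply the core lemma
  obtain ⟨hlow, hup⟩ := core μ hpos hcont hn2 hta hts hδ1 hδ2
  have h12 : (0:ℝ) ≤ 1 - (ε'/4 + ε'/4) := by linarith
  have hgt : (1 - ε'/4) * (1 - (ε'/4 + ε'/4)) ≤ (t m / t M) * (1 - (ε'/4 + ε'/4)) :=
    mul_le_mul_of_nonneg_right hc.le h12
  rw [Real.dist_eq, abs_lt]
  constructor
  · nlinarith [hlow, hgt, hε'pos, hε'le1, hε'leε]
  · linarith
end

section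
/- For any continuous MHR distribution D on [0,∞) and any constant l ∈ ℕ, the medians of maxima satisfy lim_{n→∞} t_n / t_{nl} = 1, where t_r is defined by F(t_r)^r = 1/2. -/
open MeasureTheory Filter Real

lemma auxslope : Tendsto (fun v : ℝ => (Real.exp v - 1)/v) (nhdsWithin 0 {0}ᶜ) (nhds 1) := by
  have h := hasDerivAt_iff_tendsto_slope.mp (Real.hasDerivAt_exp 0)
  simp only [Real.exp_zero, slope_def_field] at h
  refine h.congr (fun v => ?_)
  simp [slope_def_field, div_eq_div_iff]

lemma auxP : Tendsto (fun m : ℕ => (m:ℝ) * (1 - Real.exp (-Real.log 2 / m))) atTop (nhds (Real.log 2)) := by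
  have hv : Tendsto (fun m : ℕ => -Real.log 2 / (m:ℝ)) atTop (nhdsWithin 0 {0}ᶜ) := by
    apply tendsto_nhdsWithin_of_tendsto_nhds_of_eventually_within
    · exact tendsto_const_nhds.div_atTop tendsto_natCast_atTop_atTop
    · filter_upwards [eventually_ge_atTop 1] with m hm
      have hm' : (0:ℝ) < m := by exact_mod_cast hm
      have : -Real.log 2 / (m:ℝ) < 0 :=
        div_neg_of_neg_of_pos (neg_neg_iff_pos.mpr (Real.log_pos one_lt_two)) hm'
      exact this.ne
  have h2 : Tendsto (fun m : ℕ => Real.log 2 * ((Real.exp (-Real.log 2 / m) - 1) / (-Real.log 2 / m)))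
      atTop (nhds (Real.log 2 * 1)) := (tendsto_const_nhds.mul (auxslope.comp hv))
  rw [mul_one] at h2
  refine h2.congr' ?_
  filter_upwards [eventually_ge_atTop 1] with m hm
  have hm' : (0:ℝ) < m := by exact_mod_cast hm
  have hlog : Real.log 2 ≠ 0 := (Real.log_pos one_lt_two).ne'
  show Real.log 2 * ((Real.exp (-Real.log 2 / m) - 1) / (-Real.log 2 / m)) = (m:ℝ) * (1 - Real.exp (-Real.log 2 / m))
  rw [div_div_eq_mul_div, div_neg, mul_neg, mul_div_assoc', mul_div_cancel_left₀ _ hlog]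
  ring

lemma expneg_lt_one {m : ℕ} (hm : 1 ≤ m) : Real.exp (-Real.log 2 / m) < 1 := by
  have hm' : (0:ℝ) < m := by exact_mod_cast hm
  rw [Real.exp_lt_one_iff]
  exact div_neg_of_neg_of_pos (neg_neg_iff_pos.mpr (Real.log_pos one_lt_two)) hm'

lemma auxA : Tendsto (fun m : ℕ => Real.log m + Real.log (1 - Real.exp (-Real.log 2 / m)))
    atTop (nhds (Real.log (Real.log 2))) := by
  have hc : Tendsto (fun m : ℕ => Real.log ((m:ℝ) * (1 - Real.exp (-Real.log 2 / m))))
      atTop (nhds (Real.log (Real.log 2))) :=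
    ((Real.continuousAt_log (Real.log_pos one_lt_two).ne').tendsto).comp auxP
  refine hc.congr' ?_
  filter_upwards [eventually_ge_atTop 1] with m hm
  have hm' : (0:ℝ) < m := by exact_mod_cast hm
  have h1 : (0:ℝ) < 1 - Real.exp (-Real.log 2 / m) := by linarith [expneg_lt_one hm]
  rw [Real.log_mul hm'.ne' h1.ne']

lemma auxR (l : ℕ) (hl : 1 ≤ l) :
    Tendsto (fun n : ℕ => Real.log (1 - Real.exp (-Real.log 2 / n)) /
      Real.log (1 - Real.exp (-Real.log 2 / (↑(n * l) : ℝ)))) atTop (nhds 1) := by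
  set g : ℕ → ℝ := fun m => Real.log (1 - Real.exp (-Real.log 2 / m)) with hg
  have hL : Tendsto (fun n : ℕ => Real.log n) atTop atTop :=
    Real.tendsto_log_atTop.comp tendsto_natCast_atTop_atTop
  have hml : Tendsto (fun n : ℕ => n * l) atTop atTop :=
    tendsto_atTop_mono (fun n => Nat.le_mul_of_pos_right n hl) tendsto_id
  have hy : Tendsto (fun n : ℕ => Real.log n + (Real.log l + g (n * l))) atTop
      (nhds (Real.log (Real.log 2))) := by
    refine (auxA.comp hml).congr' ?_
    filter_upwards [eventually_ge_atTop 1] with n hn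
    have hn' : (0:ℝ) < n := by exact_mod_cast hn
    have hl' : (0:ℝ) < l := by exact_mod_cast hl
    have hcast : ((n * l : ℕ) : ℝ) = (n:ℝ) * (l:ℝ) := by push_cast; ring
    simp only [Function.comp_apply, hg, hcast, Real.log_mul hn'.ne' hl'.ne']
    ring
  have hnum : Tendsto (fun n : ℕ => g n / Real.log n) atTop (nhds (-1)) := by
    have h := (auxA.div_atTop hL).sub (tendsto_const_nhds (x := (1:ℝ)))
    rw [zero_sub] at h
    refine h.congr' ?_
    filter_upwards [hL.eventually_gt_atTop 0] with n hLn
    rw [add_div, div_self hLn.ne']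
    ring
  have hden : Tendsto (fun n : ℕ => g (n * l) / Real.log n) atTop (nhds (-1)) := by
    have h := ((hy.div_atTop hL).sub (tendsto_const_nhds.div_atTop hL (f := fun _ : ℕ => Real.log l))).sub
      (tendsto_const_nhds (x := (1:ℝ)))
    rw [sub_zero, zero_sub] at h
    refine h.congr' ?_
    filter_upwards [hL.eventually_gt_atTop 0] with n hLn
    field_simp
    ring
  have hfin := hnum.div hden (by norm_num : (-1:ℝ) ≠ 0)
  rw [(by norm_num : (-1:ℝ)/(-1) = 1)] at hfin
  refine hfin.congr' ?_
  filter_upwards [hL.eventually_gt_atTop 0] with n hLn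
  show (g n / Real.log n) / (g (n*l) / Real.log n) = _
  rw [div_div_div_comm, div_self hLn.ne', div_one]

theorem stmt11 (F : ℝ → ℝ) (hmono : Monotone F) (hcont : Continuous F)
    (hF0 : F 0 = 0) (hFtop : Tendsto F atTop (nhds 1))
    (hMHR : ConcaveOn ℝ (Set.Ici 0) (fun x => Real.log (1 - F x)))
    (t : ℕ → ℝ) (ht : ∀ r : ℕ, 1 ≤ r → 0 ≤ t r ∧ F (t r) ^ r = 1 / 2)
    (l : ℕ) (hl : 1 ≤ l) :
    Tendsto (fun n : ℕ => t n / t (n * l)) atTop (nhds 1) := by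
  set g : ℕ → ℝ := fun m => Real.log (1 - Real.exp (-Real.log 2 / m)) with hg
  have hlog2 : (0:ℝ) < Real.log 2 := Real.log_pos one_lt_two
  have hFt : ∀ r : ℕ, 1 ≤ r → F (t r) = Real.exp (-Real.log 2 / r) := by
    intro r hr
    have h0 : 0 ≤ F (t r) := by rw [← hF0]; exact hmono (ht r hr).1
    have hr' : (r:ℝ) ≠ 0 := by positivity
    have hpow : F (t r) ^ r = Real.exp (-Real.log 2 / r) ^ r := by
      rw [(ht r hr).2, ← Real.exp_nat_mul]
      have : (r:ℝ) * (-Real.log 2 / r) = -Real.log 2 := by field_simp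
      rw [this, Real.exp_neg, Real.exp_log two_pos]
      norm_num
    have hrne : r ≠ 0 := by omega
    exact (pow_left_strictMonoOn₀ hrne).injOn h0 (Real.exp_pos _).le hpow
  have htpos : ∀ r : ℕ, 1 ≤ r → 0 < t r := by
    intro r hr
    rcases (ht r hr).1.eq_or_lt with h | h
    · exfalso
      have : F (t r) = 0 := by rw [← h, hF0]
      rw [hFt r hr] at this
      exact (Real.exp_pos _).ne' this
    · exact h
  have hgneg : ∀ m : ℕ, 1 ≤ m → g m < 0 := by
    intro m hm
    have h1 : Real.exp (-Real.log 2 / m) < 1 := expneg_lt_one hm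
    have h0 : 0 < Real.exp (-Real.log 2 / m) := Real.exp_pos _
    exact Real.log_neg (by linarith) (by linarith)
  have hmle : ∀ n : ℕ, 1 ≤ n → t n ≤ t (n * l) := by
    intro n hn
    rcases eq_or_lt_of_le hl with h1 | h2
    · rw [← h1, mul_one]
    · by_contra hcon
      push_neg at hcon
      have hF' : F (t (n * l)) ≤ F (t n) := hmono hcon.le
      have hnl : 1 ≤ n * l := Nat.one_le_iff_ne_zero.mpr (by positivity)
      rw [hFt n hn, hFt (n * l) hnl] at hF'
      have h3 := Real.exp_le_exp.mp hF'
      have hn' : (0:ℝ) < n := by exact_mod_cast hn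
      have hcast : ((n * l : ℕ) : ℝ) = (n:ℝ) * l := by push_cast; ring
      rw [hcast] at h3
      have hl2 : (2:ℝ) ≤ l := by exact_mod_cast h2
      have hd := (div_le_div_iff₀ (by positivity) hn').mp h3
      nlinarith [mul_pos hlog2 hn', hl2]
  have hkey : ∀ n : ℕ, 1 ≤ n → g n / g (n * l) ≤ t n / t (n * l) := by
    intro n hn
    have hnl : 1 ≤ n * l := Nat.one_le_iff_ne_zero.mpr (by positivity)
    have hb := htpos (n * l) hnl
    have ha := (ht n hn).1
    have hab := hmle n hn
    set μ := t n / t (n * l) with hμ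
    have hμ0 : 0 ≤ μ := div_nonneg ha hb.le
    have hμ1 : μ ≤ 1 := (div_le_one hb).mpr hab
    have hc := hMHR.2 (Set.self_mem_Ici) (show t (n * l) ∈ Set.Ici (0:ℝ) from hb.le)
      (by linarith : (0:ℝ) ≤ 1 - μ) hμ0 (by ring)
    have hsm : (1 - μ) • (0:ℝ) + μ • t (n * l) = t n := by
      simp only [smul_eq_mul, mul_zero, zero_add, hμ]
      field_simp
    rw [hsm] at hc
    simp only [smul_eq_mul, hF0, sub_zero, Real.log_one, mul_zero, zero_add] at hc
    rw [hFt n hn, hFt (n * l) hnl] at hc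
    exact (div_le_iff_of_neg (hgneg (n * l) hnl)).mpr hc
  refine tendsto_of_tendsto_of_tendsto_of_le_of_le' (auxR l hl) tendsto_const_nhds ?_ ?_
  · filter_upwards [eventually_ge_atTop 1] with n hn
    exact hkey n hn
  · filter_upwards [eventually_ge_atTop 1] with n hn
    exact (div_le_one (htpos (n * l) (Nat.one_le_iff_ne_zero.mpr (by positivity)))).mpr (hmle n hn)
end

section
/- Let ξ: [0,∞) → (−∞,0] be a concave, strictly decreasing function with ξ(0) = 0 and ξ(x) → −∞. Let a(x) and b(x) be negative functions with a(x) ≤ b(x) < 0 and lim_{x→∞} a(x)/b(x) = 1. Then lim_{x→∞} ξ^{-1}(a(x)) / ξ^{-1}(b(x)) = 1. -/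
open MeasureTheory Filter Real

theorem stmt12 (ξ g : ℝ → ℝ)
    (hconc : ConcaveOn ℝ (Set.Ici 0) ξ) (hanti : StrictAntiOn ξ (Set.Ici 0))
    (h0 : ξ 0 = 0) (htop : Tendsto ξ atTop atBot)
    (hinv : ∀ y : ℝ, y ≤ 0 → 0 ≤ g y ∧ ξ (g y) = y)
    (a b : ℝ → ℝ) (hab : ∀ x, a x ≤ b x) (hb : ∀ x, b x < 0)
    (hlim : Tendsto (fun x => a x / b x) atTop (nhds 1)) :
    Tendsto (fun x => g (a x) / g (b x)) atTop (nhds 1) := by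
  have key : ∀ x, 1 ≤ g (a x) / g (b x) ∧ g (a x) / g (b x) ≤ a x / b x := by
    intro x
    have hax : a x < 0 := lt_of_le_of_lt (hab x) (hb x)
    obtain ⟨hga0, hgaξ⟩ := hinv (a x) hax.le
    obtain ⟨hgb0, hgbξ⟩ := hinv (b x) (hb x).le
    have hgbpos : 0 < g (b x) := by
      rcases hgb0.lt_or_eq with h | h
      · exact h
      · exfalso
        have : (0:ℝ) = b x := by rw [← h0, h]; exact hgbξ
        exact (hb x).ne' this
    have h1 : g (b x) ≤ g (a x) := by
      by_contra h
      push_neg at h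
      have := hanti hga0 hgb0 h
      rw [hgaξ, hgbξ] at this
      exact absurd (hab x) (not_le.mpr this)
    set lam := a x / b x with hlam
    have hlam1 : 1 ≤ lam := by
      rw [hlam, le_div_iff_of_neg (hb x)]
      simpa using hab x
    have hlampos : 0 < lam := lt_of_lt_of_le one_pos hlam1
    -- concavity: ξ (g (b x)) ≥ (1/lam) * ξ (lam * g (b x))
    have hmem0 : (0:ℝ) ∈ Set.Ici (0:ℝ) := Set.mem_Ici.mpr le_rfl
    have hmem1 : lam * g (b x) ∈ Set.Ici (0:ℝ) :=
      mul_nonneg hlampos.le hgb0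
    have hp : (0:ℝ) ≤ 1 - 1/lam := by
      have : 1/lam ≤ 1 := by
        rw [div_le_one hlampos]; exact hlam1
      linarith
    have hq : (0:ℝ) ≤ 1/lam := by positivity
    have hpq : (1 - 1/lam) + 1/lam = 1 := by ring
    have hcc := hconc.2 hmem0 hmem1 hp hq hpq
    have harg : (1 - 1/lam) • (0:ℝ) + (1/lam) • (lam * g (b x)) = g (b x) := by
      rw [smul_zero, zero_add, smul_eq_mul, one_div, inv_mul_cancel_left₀ hlampos.ne']
    rw [harg, h0, hgbξ] at hcc
    -- hcc : (1-1/lam)*0 + (1/lam) * ξ (lam * g (b x)) ≤ b x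
    have hξlam : ξ (lam * g (b x)) ≤ a x := by
      have h2 : (1/lam) * ξ (lam * g (b x)) ≤ b x := by
        simpa using hcc
      have h3 : lam * ((1/lam) * ξ (lam * g (b x))) ≤ lam * b x :=
        mul_le_mul_of_nonneg_left h2 hlampos.le
      have h4 : lam * ((1/lam) * ξ (lam * g (b x))) = ξ (lam * g (b x)) := by
        field_simp
      have h5 : lam * b x = a x := by
        rw [hlam, div_mul_cancel₀ _ (hb x).ne]
      rw [h4, h5] at h3
      exact h3
    have h6 : g (a x) ≤ lam * g (b x) := by
      by_contra h
      push_neg at h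
      have := hanti hmem1 hga0 h
      rw [hgaξ] at this
      exact absurd hξlam (not_le.mpr this)
    constructor
    · exact (one_le_div hgbpos).mpr h1
    · rw [div_le_iff₀ hgbpos]
      exact h6
  exact tendsto_of_tendsto_of_tendsto_of_le_of_le tendsto_const_nhds hlim
    (fun x => (key x).1) (fun x => (key x).2)
end

section
/- For the exponential distribution and k = ⌈√n⌉ with n² bidders, lim_{n→∞} E[X_{(n)}^{n²} / X_{(1)}^{n²}] < 1; indeed with probability at least 9/200 (asymptotically) the ratio X_{(n)}^{n²}/X_{(1)}^{n²} is at most 1/2 + ε for any ε > 0. -/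
open MeasureTheory Filter Real

open scoped ENNReal

/-! ### Auxiliary deterministic facts about `kthLargest` -/

noncomputable def dInf {n : ℕ} (x : Fin n → ℝ) (S : Finset (Fin n)) : ℝ :=
  if hS : S.Nonempty then S.inf' hS x else 0

lemma dInf_eq {n : ℕ} (x : Fin n → ℝ) {S : Finset (Fin n)} (h : S.Nonempty) :
    dInf x S = S.inf' h x := by simp [dInf, h]

lemma pc_nonempty {n r : ℕ} (h : r ≤ n) :
    ((Finset.univ : Finset (Fin n)).powersetCard r).Nonempty :=
  Finset.powersetCard_nonempty.2 (by simpa using h)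

lemma mem_pc_nonempty {n r : ℕ} (hr : 1 ≤ r) {S : Finset (Fin n)}
    (h : S ∈ (Finset.univ : Finset (Fin n)).powersetCard r) : S.Nonempty := by
  rw [Finset.mem_powersetCard] at h
  exact Finset.card_pos.1 (h.2 ▸ hr)

noncomputable def kthAlt {n : ℕ} (x : Fin n → ℝ) (r : ℕ)
    (h : ((Finset.univ : Finset (Fin n)).powersetCard r).Nonempty) : ℝ :=
  ((Finset.univ : Finset (Fin n)).powersetCard r).sup' h (dInf x)

lemma le_kthAlt_iff {n : ℕ} (x : Fin n → ℝ) {r : ℕ} (hr : 1 ≤ r)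
    (h : ((Finset.univ : Finset (Fin n)).powersetCard r).Nonempty) (t : ℝ) :
    t ≤ kthAlt x r h ↔ r ≤ (Finset.univ.filter (fun i => t ≤ x i)).card := by
  rw [kthAlt, Finset.le_sup'_iff]
  constructor
  · rintro ⟨S, hS, hle⟩
    have hSne := mem_pc_nonempty hr hS
    rw [dInf_eq x hSne, Finset.le_inf'_iff] at hle
    have hsub : S ⊆ Finset.univ.filter (fun i => t ≤ x i) := by
      intro i hi; exact Finset.mem_filter.2 ⟨Finset.mem_univ i, hle i hi⟩
    calc r = S.card := ((Finset.mem_powersetCard.1 hS).2).symm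
      _ ≤ _ := Finset.card_le_card hsub
  · intro hcard
    obtain ⟨S, hSsub, hScard⟩ := Finset.exists_subset_card_eq hcard
    have hSne : S.Nonempty := Finset.card_pos.1 (hScard ▸ hr)
    refine ⟨S, Finset.mem_powersetCard.2 ⟨Finset.subset_univ _, hScard⟩, ?_⟩
    rw [dInf_eq x hSne, Finset.le_inf'_iff]
    exact fun i hi => (Finset.mem_filter.1 (hSsub hi)).2

lemma lt_kthAlt_iff {n : ℕ} (x : Fin n → ℝ) {r : ℕ} (hr : 1 ≤ r)
    (h : ((Finset.univ : Finset (Fin n)).powersetCard r).Nonempty) (t : ℝ) :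
    t < kthAlt x r h ↔ r ≤ (Finset.univ.filter (fun i => t < x i)).card := by
  rw [kthAlt, Finset.lt_sup'_iff]
  constructor
  · rintro ⟨S, hS, hle⟩
    have hSne := mem_pc_nonempty hr hS
    rw [dInf_eq x hSne, Finset.lt_inf'_iff] at hle
    have hsub : S ⊆ Finset.univ.filter (fun i => t < x i) := by
      intro i hi; exact Finset.mem_filter.2 ⟨Finset.mem_univ i, hle i hi⟩
    calc r = S.card := ((Finset.mem_powersetCard.1 hS).2).symm
      _ ≤ _ := Finset.card_le_card hsub
  · intro hcard
    obtain ⟨S, hSsub, hScard⟩ := Finset.exists_subset_card_eq hcard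
    have hSne : S.Nonempty := Finset.card_pos.1 (hScard ▸ hr)
    refine ⟨S, Finset.mem_powersetCard.2 ⟨Finset.subset_univ _, hScard⟩, ?_⟩
    rw [dInf_eq x hSne, Finset.lt_inf'_iff]
    exact fun i hi => (Finset.mem_filter.1 (hSsub hi)).2

lemma kthLargest_eq_kthAlt {n : ℕ} (x : Fin n → ℝ) {r : ℕ} (hr : 1 ≤ r) (hrn : r ≤ n) :
    kthLargest x r = kthAlt x r (pc_nonempty hrn) := by
  have hset : {t : ℝ | r ≤ (Finset.univ.filter (fun i => t ≤ x i)).card}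
      = Set.Iic (kthAlt x r (pc_nonempty hrn)) := by
    ext t
    simp only [Set.mem_setOf_eq, Set.mem_Iic]
    exact (le_kthAlt_iff x hr (pc_nonempty hrn) t).symm
  rw [kthLargest, hset, csSup_Iic]

lemma coord_le_kthAlt {n : ℕ} (x : Fin n → ℝ)
    (h : ((Finset.univ : Finset (Fin n)).powersetCard 1).Nonempty) (i : Fin n) :
    x i ≤ kthAlt x 1 h := by
  have hmem : ({i} : Finset (Fin n)) ∈ (Finset.univ : Finset (Fin n)).powersetCard 1 :=
    Finset.mem_powersetCard.2 ⟨Finset.subset_univ _, Finset.card_singleton i⟩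
  have hval : dInf x {i} = x i := by
    rw [dInf_eq x (Finset.singleton_nonempty i)]; simp
  calc x i = dInf x {i} := hval.symm
    _ ≤ _ := Finset.le_sup' (dInf x) hmem

lemma kthAlt_le_first {n : ℕ} (x : Fin n → ℝ) {r : ℕ} (hr : 1 ≤ r)
    (h : ((Finset.univ : Finset (Fin n)).powersetCard r).Nonempty)
    (h1 : ((Finset.univ : Finset (Fin n)).powersetCard 1).Nonempty) :
    kthAlt x r h ≤ kthAlt x 1 h1 := by
  rw [kthAlt]
  apply Finset.sup'_le
  intro S hS
  have hSne := mem_pc_nonempty hr hS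
  obtain ⟨i, hi⟩ := id hSne
  rw [dInf_eq x hSne]
  exact le_trans (Finset.inf'_le x hi) (coord_le_kthAlt x h1 i)

lemma kthAlt_nonneg {n : ℕ} (x : Fin n → ℝ) {r : ℕ} (hr : 1 ≤ r)
    (h : ((Finset.univ : Finset (Fin n)).powersetCard r).Nonempty)
    (hx : ∀ i, 0 ≤ x i) : 0 ≤ kthAlt x r h := by
  obtain ⟨S, hS⟩ := id h
  have hSne := mem_pc_nonempty hr hS
  have h0 : (0:ℝ) ≤ dInf x S := by
    rw [dInf_eq x hSne, Finset.le_inf'_iff]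
    exact fun i _ => hx i
  exact le_trans h0 (Finset.le_sup' (dInf x) hS)

/-! ### Measure-theoretic facts -/

section Meas
variable {c : ℝ} (μ : Measure ℝ) [IsProbabilityMeasure μ]

instance iidProb (μ : Measure ℝ) [IsProbabilityMeasure μ] (n : ℕ) :
    IsProbabilityMeasure (iidMeasure μ n) := by
  unfold iidMeasure; infer_instance

lemma muIic (hμ : ∀ t : ℝ, 0 ≤ t → (μ (Set.Iic t)).toReal = 1 - Real.exp (-(c * t)))
    (t : ℝ) (ht : 0 ≤ t) : μ (Set.Iic t) = ENNReal.ofReal (1 - Real.exp (-(c * t))) := by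
  rw [← hμ t ht, ENNReal.ofReal_toReal (measure_ne_top μ _)]

lemma exple1 (t : ℝ) (ht : 0 ≤ t) (hc : 0 < c) : Real.exp (-(c * t)) ≤ 1 := by
  rw [← Real.exp_zero]
  exact Real.exp_le_exp.2 (by nlinarith)

lemma muIoi (hμ : ∀ t : ℝ, 0 ≤ t → (μ (Set.Iic t)).toReal = 1 - Real.exp (-(c * t)))
    (t : ℝ) (ht : 0 ≤ t) (hc : 0 < c) :
    μ (Set.Ioi t) = ENNReal.ofReal (Real.exp (-(c * t))) := by
  have h1 : (Set.Ioi t) = (Set.Iic t)ᶜ := by simp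
  rw [h1, prob_compl_eq_one_sub measurableSet_Iic, muIic μ hμ t ht]
  have he := (Real.exp_pos (-(c * t))).le
  have he1 := exple1 t ht hc
  refine ENNReal.sub_eq_of_eq_add (by simp) ?_
  rw [← ENNReal.ofReal_add he (by linarith), ← ENNReal.ofReal_one]
  congr 1; ring

lemma allBelow (N : ℕ) (s : ℝ) :
    iidMeasure μ N {x | ∀ i, x i < s} = μ (Set.Iio s) ^ N := by
  have h1 : {x : Fin N → ℝ | ∀ i, x i < s} = Set.pi Set.univ (fun _ => Set.Iio s) := by
    ext x; simp [Set.mem_pi]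
  rw [h1, iidMeasure, Measure.pi_pi, Finset.prod_const, Finset.card_univ, Fintype.card_fin]

lemma evalAbove (N : ℕ) (t : ℝ) (i : Fin N) :
    iidMeasure μ N {x | t < x i} = μ (Set.Ioi t) := by
  have h1 : {x : Fin N → ℝ | t < x i} =
      Set.pi Set.univ (fun j => if j = i then Set.Ioi t else Set.univ) := by
    ext x
    simp only [Set.mem_setOf_eq, Set.mem_univ_pi]
    constructor
    · intro h j
      by_cases hj : j = i <;> simp [hj, h]
    · intro h
      have := h i; simpa using this
  rw [h1, iidMeasure, Measure.pi_pi]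
  rw [Finset.prod_eq_single i (fun j _ hj => by simp [hj]) (by simp)]
  simp

lemma countMeasurable (N : ℕ) (t : ℝ) :
    Measurable (fun x : Fin N → ℝ =>
      ((Finset.univ.filter (fun i => t < x i)).card : ℝ≥0∞)) := by
  have h1 : (fun x : Fin N → ℝ => ((Finset.univ.filter (fun i => t < x i)).card : ℝ≥0∞))
      = fun x => ∑ i : Fin N, if t < x i then (1:ℝ≥0∞) else 0 := by
    funext x
    rw [Finset.card_filter]
    push_cast
    simp
  rw [h1]
  apply Finset.measurable_sum
  intro i _
  exact Measurable.ite ((measurable_pi_apply i) measurableSet_Ioi)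
    measurable_const measurable_const

lemma badMeasurable (N r : ℕ) (t : ℝ) :
    MeasurableSet {x : Fin N → ℝ | r ≤ (Finset.univ.filter (fun i => t < x i)).card} := by
  have h1 : {x : Fin N → ℝ | r ≤ (Finset.univ.filter (fun i => t < x i)).card}
      = (fun x : Fin N → ℝ => ((Finset.univ.filter (fun i => t < x i)).card : ℝ≥0∞))
        ⁻¹' (Set.Ici (r : ℝ≥0∞)) := by
    ext x; simp [Nat.cast_le]
  rw [h1]
  exact countMeasurable N t measurableSet_Ici

lemma countLintegral (N : ℕ) (t : ℝ) :
    ∫⁻ x, ((Finset.univ.filter (fun i => t < x i)).card : ℝ≥0∞) ∂(iidMeasure μ N)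
      = N * μ (Set.Ioi t) := by
  have h1 : ∀ x : Fin N → ℝ, ((Finset.univ.filter (fun i => t < x i)).card : ℝ≥0∞)
      = ∑ i : Fin N, Set.indicator {x : Fin N → ℝ | t < x i} (fun _ => (1:ℝ≥0∞)) x := by
    intro x
    rw [Finset.card_filter]
    push_cast
    simp [Set.indicator_apply]
  simp_rw [h1]
  rw [lintegral_finset_sum]
  · have h2 : ∀ i : Fin N,
        ∫⁻ x, Set.indicator {x : Fin N → ℝ | t < x i} (fun _ => (1:ℝ≥0∞)) x ∂(iidMeasure μ N)
          = μ (Set.Ioi t) := by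
      intro i
      rw [lintegral_indicator_const (show MeasurableSet {x : Fin N → ℝ | t < x i} from
        (measurable_pi_apply i) measurableSet_Ioi)]
      rw [evalAbove μ N t i, one_mul]
    simp_rw [h2]
    simp [mul_comm]
  · intro i _
    exact (measurable_const (a := (1:ℝ≥0∞))).indicator ((measurable_pi_apply i) measurableSet_Ioi)

lemma markovCount (N r : ℕ) (t : ℝ) :
    (r : ℝ≥0∞) * iidMeasure μ N {x | r ≤ (Finset.univ.filter (fun i => t < x i)).card}
      ≤ N * μ (Set.Ioi t) := by
  have h1 : {x : Fin N → ℝ | r ≤ (Finset.univ.filter (fun i => t < x i)).card}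
      = {x : Fin N → ℝ | (r:ℝ≥0∞) ≤ ((Finset.univ.filter (fun i => t < x i)).card : ℝ≥0∞)} := by
    ext x; simp [Nat.cast_le]
  rw [h1, ← countLintegral μ N t]
  exact mul_meas_ge_le_lintegral (countMeasurable N t) _

lemma aeNonneg (hneg : μ (Set.Iio 0) = 0) (N : ℕ) :
    ∀ᵐ x ∂(iidMeasure μ N), ∀ i, 0 ≤ x i := by
  rw [ae_iff]
  have h1 : {x : Fin N → ℝ | ¬ ∀ i, 0 ≤ x i} = ⋃ i, {x : Fin N → ℝ | x i < 0} := by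
    ext x; simp [not_forall, not_le]
  rw [h1]
  refine measure_iUnion_null fun i => ?_
  have h2 : {x : Fin N → ℝ | x i < 0} =
      Set.pi Set.univ (fun j => if j = i then Set.Iio 0 else Set.univ) := by
    ext x
    simp only [Set.mem_setOf_eq, Set.mem_univ_pi]
    constructor
    · intro h j
      by_cases hj : j = i <;> simp [hj, h]
    · intro h
      have := h i; simpa using this
  rw [h2, iidMeasure, Measure.pi_pi]
  exact Finset.prod_eq_zero (Finset.mem_univ i) (by simp [hneg])

end Meas

/-! ### The key asymptotic lemma -/

lemma keyLemma {c : ℝ} (hc : 0 < c) (μ : Measure ℝ) [IsProbabilityMeasure μ]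
    (hμ : ∀ t : ℝ, 0 ≤ t → (μ (Set.Iic t)).toReal = 1 - Real.exp (-(c * t)))
    {ε : ℝ} (hε : 0 < ε) :
    ∀ᶠ n : ℕ in atTop, ∃ G : Set (Fin (n^2) → ℝ), MeasurableSet G ∧
      ENNReal.ofReal (1/2) ≤ iidMeasure μ (n^2) G ∧
      ∀ x ∈ G, kthLargest x n / kthLargest x 1 ≤ 1/2 + ε := by
  set η := min ε (1/2) with hηdef
  have hη0 : 0 < η := lt_min hε (by norm_num)
  have hηε : η ≤ ε := min_le_left _ _
  have hη2 : η ≤ 1/2 := min_le_right _ _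
  have ev2 : ∀ᶠ n : ℕ in atTop, Real.exp (-(n:ℝ)^η) ≤ 1/4 := by
    have h1 : Tendsto (fun n : ℕ => ((n:ℝ))^η) atTop atTop :=
      (tendsto_rpow_atTop hη0).comp tendsto_natCast_atTop_atTop
    have h2 : Tendsto (fun n : ℕ => Real.exp (-(n:ℝ)^η)) atTop (nhds 0) :=
      Real.tendsto_exp_atBot.comp (tendsto_neg_atTop_atBot.comp h1)
    exact (h2.eventually_lt_const (by norm_num : (0:ℝ) < 1/4)).mono fun n h => h.le
  have ev3 : ∀ᶠ n : ℕ in atTop, ((n:ℝ))^(-η) ≤ 1/4 := by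
    have h1 : Tendsto (fun n : ℕ => ((n:ℝ))^(-η)) atTop (nhds 0) :=
      (tendsto_rpow_neg_atTop hη0).comp tendsto_natCast_atTop_atTop
    exact (h1.eventually_lt_const (by norm_num : (0:ℝ) < 1/4)).mono fun n h => h.le
  filter_upwards [eventually_ge_atTop 2, ev2, ev3] with n hn2 hexp hrpow
  have hn1 : 1 ≤ n := le_trans (by norm_num) hn2
  have hn0 : (0:ℝ) < n := by positivity
  have hn0' : (1:ℝ) < n := by exact_mod_cast hn2
  have hL : 0 < Real.log n := Real.log_pos hn0'
  set L := Real.log n with hLdef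
  set t := (1+η)*L/c with htdef
  set s := (2-η)*L/c with hsdef
  have ht0 : 0 ≤ t := by
    apply le_of_lt; apply div_pos (mul_pos (by linarith) hL) hc
  have hs0 : 0 < s := div_pos (mul_pos (by linarith) hL) hc
  have hct : c * t = (1+η)*L := by rw [htdef]; field_simp
  have hcs : c * s = (2-η)*L := by rw [hsdef]; field_simp
  set bad2 := {x : Fin (n^2) → ℝ | n ≤ (Finset.univ.filter (fun i => t < x i)).card} with hbad2def
  set bad1 := {x : Fin (n^2) → ℝ | ∀ i, x i < s} with hbad1def
  have hbad2m : MeasurableSet bad2 := badMeasurable (n^2) n t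
  have hbad1m : MeasurableSet bad1 := by
    have h1 : bad1 = ⋂ i, {x : Fin (n^2) → ℝ | x i < s} := by ext x; simp [hbad1def]
    rw [h1]
    exact MeasurableSet.iInter fun i => (measurable_pi_apply i) measurableSet_Iio
  -- bound on bad1
  have hb1 : iidMeasure μ (n^2) bad1 ≤ ENNReal.ofReal (1/4) := by
    have he1 : Real.exp (-(c*s)) ≤ 1 := exple1 s hs0.le hc
    have he0 : (0:ℝ) ≤ Real.exp (-(c*s)) := (Real.exp_pos _).le
    have hexp2 : ((n^2 : ℕ) : ℝ) * Real.exp (-(c*s)) = (n:ℝ)^η := by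
      rw [hcs]
      have h1 : Real.exp (-((2-η) * L)) = (n:ℝ)^(-(2-η)) := by
        rw [Real.rpow_def_of_pos hn0, hLdef]; ring_nf
      rw [h1]
      push_cast
      rw [← Real.rpow_natCast (n:ℝ) 2, ← Real.rpow_add hn0]
      norm_num
    calc iidMeasure μ (n^2) bad1 = μ (Set.Iio s) ^ (n^2) := allBelow μ (n^2) s
      _ ≤ (ENNReal.ofReal (1 - Real.exp (-(c*s))))^(n^2) := by
          gcongr
          exact (measure_mono Set.Iio_subset_Iic_self).trans_eq (muIic μ hμ s hs0.le)
      _ = ENNReal.ofReal ((1 - Real.exp (-(c*s)))^(n^2)) :=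
          (ENNReal.ofReal_pow (by linarith) _).symm
      _ ≤ ENNReal.ofReal (Real.exp (-(((n^2:ℕ):ℝ) * Real.exp (-(c*s))))) := by
          apply ENNReal.ofReal_le_ofReal
          have h1 : 1 - Real.exp (-(c*s)) ≤ Real.exp (-Real.exp (-(c*s))) := by
            have := Real.add_one_le_exp (-Real.exp (-(c*s))); linarith
          calc (1 - Real.exp (-(c*s)))^(n^2)
              ≤ (Real.exp (-Real.exp (-(c*s))))^(n^2) := pow_le_pow_left₀ (by linarith) h1 _
            _ = Real.exp (((n^2:ℕ):ℝ) * -Real.exp (-(c*s))) := (Real.exp_nat_mul _ _).symm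
            _ = Real.exp (-(((n^2:ℕ):ℝ) * Real.exp (-(c*s)))) := by ring_nf
      _ = ENNReal.ofReal (Real.exp (-((n:ℝ)^η))) := by rw [hexp2]
      _ ≤ ENNReal.ofReal (1/4) := ENNReal.ofReal_le_ofReal hexp
  -- bound on bad2
  have hb2 : iidMeasure μ (n^2) bad2 ≤ ENNReal.ofReal (1/4) := by
    have hmark := markovCount μ (n^2) n t
    rw [muIoi μ hμ t ht0 hc] at hmark
    have hsplit : ((n^2 : ℕ) : ℝ≥0∞) * ENNReal.ofReal (Real.exp (-(c*t)))
        = (n : ℝ≥0∞) * ENNReal.ofReal ((n:ℝ) * Real.exp (-(c*t))) := by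
      rw [ENNReal.ofReal_mul hn0.le, ENNReal.ofReal_natCast]
      push_cast
      ring
    rw [hsplit] at hmark
    have hcancel : iidMeasure μ (n^2) bad2 ≤ ENNReal.ofReal ((n:ℝ) * Real.exp (-(c*t))) := by
      rwa [ENNReal.mul_le_mul_iff_right (by exact_mod_cast (by omega : n ≠ 0)) (by simp)] at hmark
    have hval : (n:ℝ) * Real.exp (-(c*t)) = (n:ℝ)^(-η) := by
      rw [hct]
      have h1 : Real.exp (-((1+η) * L)) = (n:ℝ)^(-(1+η)) := by
        rw [Real.rpow_def_of_pos hn0, hLdef]; ring_nf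
      rw [h1]
      calc (n:ℝ) * (n:ℝ)^(-(1+η)) = (n:ℝ)^(1:ℝ) * (n:ℝ)^(-(1+η)) := by rw [Real.rpow_one]
        _ = (n:ℝ)^((1:ℝ) + -(1+η)) := (Real.rpow_add hn0 _ _).symm
        _ = _ := by norm_num
    rw [hval] at hcancel
    exact hcancel.trans (ENNReal.ofReal_le_ofReal hrpow)
  refine ⟨(bad2 ∪ bad1)ᶜ, (hbad2m.union hbad1m).compl, ?_, ?_⟩
  · rw [prob_compl_eq_one_sub (hbad2m.union hbad1m)]
    have hsum : iidMeasure μ (n^2) (bad2 ∪ bad1) ≤ ENNReal.ofReal (1/2) := by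
      refine (measure_union_le _ _).trans ?_
      refine (add_le_add hb2 hb1).trans_eq ?_
      rw [← ENNReal.ofReal_add (by norm_num) (by norm_num)]
      norm_num
    have hhalf : (1:ℝ≥0∞) - ENNReal.ofReal (1/2) = ENNReal.ofReal (1/2) := by
      refine ENNReal.sub_eq_of_eq_add (by simp) ?_
      rw [← ENNReal.ofReal_add (by norm_num) (by norm_num)]
      norm_num
    calc ENNReal.ofReal (1/2) = 1 - ENNReal.ofReal (1/2) := hhalf.symm
      _ ≤ 1 - iidMeasure μ (n^2) (bad2 ∪ bad1) := tsub_le_tsub_left hsum 1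
  · intro x hx
    rw [Set.mem_compl_iff, Set.mem_union] at hx
    push_neg at hx
    obtain ⟨hx2, hx1⟩ := hx
    simp only [hbad1def, Set.mem_setOf_eq, not_forall, not_lt] at hx1
    obtain ⟨i0, hi0⟩ := hx1
    have hnN : n ≤ n^2 := Nat.le_self_pow two_ne_zero n
    have h1N : 1 ≤ n^2 := le_trans hn1 hnN
    have hk1 : kthLargest x 1 = kthAlt x 1 (pc_nonempty h1N) := kthLargest_eq_kthAlt x le_rfl h1N
    have hkn : kthLargest x n = kthAlt x n (pc_nonempty hnN) := kthLargest_eq_kthAlt x hn1 hnN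
    have hk1s : s ≤ kthLargest x 1 := by
      rw [hk1]
      exact le_trans hi0 (coord_le_kthAlt x _ i0)
    have hknt : kthLargest x n ≤ t := by
      rw [hkn]
      by_contra h
      push_neg at h
      exact hx2 ((lt_kthAlt_iff x hn1 _ t).1 h)
    have h2η : (0:ℝ) < 2 - η := by linarith
    calc kthLargest x n / kthLargest x 1 ≤ t / s := div_le_div₀ ht0 hknt hs0 hk1s
      _ = (1+η)/(2-η) := by
          rw [htdef, hsdef, div_div_div_eq]
          rw [mul_comm c ((2-η)*L), mul_div_mul_right _ _ hc.ne', mul_div_mul_right _ _ hL.ne']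
      _ ≤ 1/2 + ε := by
          rw [div_le_iff₀ h2η]
          nlinarith

theorem stmt16 (c : ℝ) (hc : 0 < c) (μ : Measure ℝ) [IsProbabilityMeasure μ]
    (hμ : ∀ t : ℝ, 0 ≤ t → (μ (Set.Iic t)).toReal = 1 - Real.exp (-(c * t)))
    (hneg : μ (Set.Iio 0) = 0) :
    limsup (fun n : ℕ =>
        ∫ x, kthLargest x n / kthLargest x 1 ∂(iidMeasure μ (n ^ 2))) atTop < 1 ∧
    ∀ ε > (0 : ℝ), ∀ᶠ n : ℕ in atTop,
      ENNReal.ofReal (9 / 200) ≤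
        iidMeasure μ (n ^ 2) {x | kthLargest x n / kthLargest x 1 ≤ 1 / 2 + ε} := by
  have hE0 : ∀ n : ℕ, 0 ≤ ∫ x, kthLargest x n / kthLargest x 1 ∂(iidMeasure μ (n^2)) := by
    intro n
    rcases Nat.eq_zero_or_pos n with h0 | h1
    · subst h0
      have hzero : (fun x : Fin (0^2) → ℝ => kthLargest x 0 / kthLargest x 1)
          = fun _ => (0:ℝ) := by
        funext x
        have h1 : kthLargest x 0 = 0 := by
          rw [kthLargest]
          have h2 : {t : ℝ | 0 ≤ (Finset.univ.filter (fun i => t ≤ x i)).card} = Set.univ := by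
            ext u; simp
          rw [h2, Real.sSup_univ]
        rw [h1, zero_div]
      rw [hzero]
      simp
    · apply integral_nonneg_of_ae
      filter_upwards [aeNonneg μ hneg (n^2)] with x hx
      have hnN : n ≤ n^2 := Nat.le_self_pow two_ne_zero n
      have h1N : 1 ≤ n^2 := le_trans h1 hnN
      rw [kthLargest_eq_kthAlt x h1 hnN, kthLargest_eq_kthAlt x le_rfl h1N]
      exact div_nonneg (kthAlt_nonneg x h1 _ hx) (kthAlt_nonneg x le_rfl _ hx)
  constructor
  · have hbound : ∀ᶠ n : ℕ in atTop,
        (∫ x, kthLargest x n / kthLargest x 1 ∂(iidMeasure μ (n^2))) ≤ 7/8 := by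
      filter_upwards [keyLemma hc μ hμ (by norm_num : (0:ℝ) < 1/4), eventually_ge_atTop 2]
        with n hKey hn2
      obtain ⟨G, hGm, hGle, hGprop⟩ := hKey
      have hn1 : 1 ≤ n := le_trans (by norm_num) hn2
      have hnN : n ≤ n^2 := Nat.le_self_pow two_ne_zero n
      have h1N : 1 ≤ n^2 := le_trans hn1 hnN
      by_cases hInt : Integrable (fun x => kthLargest x n / kthLargest x 1) (iidMeasure μ (n^2))
      · set g := fun x : Fin (n^2) → ℝ => 1 - Set.indicator G (fun _ => (1/4:ℝ)) x with hgdef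
        have hgInt : Integrable g (iidMeasure μ (n^2)) :=
          (integrable_const 1).sub ((integrable_const (1/4:ℝ)).indicator hGm)
        have hle : (fun x => kthLargest x n / kthLargest x 1) ≤ᵐ[iidMeasure μ (n^2)] g := by
          filter_upwards [aeNonneg μ hneg (n^2)] with x hx
          by_cases hxG : x ∈ G
          · have := hGprop x hxG
            simp only [hgdef, Set.indicator_of_mem hxG]
            linarith
          · simp only [hgdef, Set.indicator_of_notMem hxG, sub_zero]
            rw [kthLargest_eq_kthAlt x hn1 hnN, kthLargest_eq_kthAlt x le_rfl h1N]
            have hnum := kthAlt_le_first x hn1 (pc_nonempty hnN) (pc_nonempty h1N)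
            have hden := kthAlt_nonneg x le_rfl (pc_nonempty h1N) hx
            rcases hden.eq_or_lt with h | h
            · rw [← h, div_zero]; norm_num
            · exact (div_le_one h).2 hnum
        have hcalc : ∫ x, g x ∂(iidMeasure μ (n^2))
            = 1 - (iidMeasure μ (n^2) G).toReal * (1/4) := by
          rw [hgdef]
          rw [integral_sub (integrable_const 1) ((integrable_const (1/4:ℝ)).indicator hGm)]
          rw [integral_const, integral_indicator_const _ hGm]
          simp [measure_univ, smul_eq_mul]
          rfl
        have h12 : 1/2 ≤ (iidMeasure μ (n^2) G).toReal := by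
          have := ENNReal.toReal_mono (measure_ne_top _ G) hGle
          rwa [ENNReal.toReal_ofReal (by norm_num)] at this
        calc ∫ x, kthLargest x n / kthLargest x 1 ∂(iidMeasure μ (n^2))
            ≤ ∫ x, g x ∂(iidMeasure μ (n^2)) := integral_mono_ae hInt hgInt hle
          _ = 1 - (iidMeasure μ (n^2) G).toReal * (1/4) := hcalc
          _ ≤ 7/8 := by linarith
      · rw [integral_undef hInt]
        norm_num
    have hcb : IsCoboundedUnder (· ≤ ·)
        atTop (fun n : ℕ => ∫ x, kthLargest x n / kthLargest x 1 ∂(iidMeasure μ (n^2))) :=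
      isCoboundedUnder_le_of_le atTop hE0
    calc limsup (fun n : ℕ =>
          ∫ x, kthLargest x n / kthLargest x 1 ∂(iidMeasure μ (n ^ 2))) atTop
        ≤ 7/8 := limsup_le_of_le hcb hbound
      _ < 1 := by norm_num
  · intro ε hε
    filter_upwards [keyLemma hc μ hμ hε] with n hKey
    obtain ⟨G, hGm, hGle, hGprop⟩ := hKey
    calc ENNReal.ofReal (9/200) ≤ ENNReal.ofReal (1/2) :=
          ENNReal.ofReal_le_ofReal (by norm_num)
      _ ≤ iidMeasure μ (n^2) G := hGle
      _ ≤ iidMeasure μ (n^2) {x | kthLargest x n / kthLargest x 1 ≤ 1/2 + ε} :=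
          measure_mono fun x hx => hGprop x hx
end

section
/- Let p = f(n)/n and i = g(f(n)) where f(x) < x, f(x) = ω(1), and g(x) = x/h(x) with h(x) → ∞. Then n·D(i/n ‖ p) → ∞ as n → ∞, where D(a‖p) = a·log(a/p) + (1−a)·log((1−a)/(1−p)) is the KL divergence between Bernoulli(a) and Bernoulli(p). -/
open Filter Real

lemma log_le_div_e {x : ℝ} (hx : 0 < x) : Real.log x ≤ x / Real.exp 1 := by
  have h1 : 0 < x / Real.exp 1 := div_pos hx (Real.exp_pos 1)
  have h2 := Real.log_le_sub_one_of_pos h1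
  rw [Real.log_div hx.ne' (Real.exp_pos 1).ne', Real.log_exp] at h2
  linarith

lemma key (F n hF : ℝ) (hF0 : 0 < F) (hFn : F < n) (hhF : 100 ≤ hF) :
    F / 2 ≤ (F / hF) * Real.logb 2 ((F / hF) / F) +
      (n - F / hF) * Real.logb 2 ((n - F / hF) / (n - F)) := by
  have hFpos : (0:ℝ) < hF := by linarith
  have hG0 : 0 < F / hF := div_pos hF0 hFpos
  have hGF : F / hF ≤ F / 100 := by
    apply div_le_div_of_nonneg_left hF0.le (by norm_num) hhF
  set G := F / hF with hGdef
  have hB : 0 < n - F := by linarith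
  have hA : 0 < n - G := by linarith
  have hAB : n - F ≤ n - G := by linarith
  have hlog2 : (0:ℝ) < Real.log 2 := Real.log_pos (by norm_num)
  -- first term
  have e1 : G / F = 1 / hF := by field_simp [hGdef]; rw [hGdef, div_mul_cancel₀ F hFpos.ne']
  have t1 : G * Real.logb 2 (G / F) = -(F * (Real.log hF / (hF * Real.log 2))) := by
    rw [e1, Real.logb, Real.log_div one_ne_zero hFpos.ne', Real.log_one, hGdef]
    field_simp
    ring
  have hloghF : Real.log hF ≤ hF / Real.exp 1 := log_le_div_e hFpos
  have hloghF0 : 0 ≤ Real.log hF := Real.log_nonneg (by linarith)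
  have he : (2.7182818283 : ℝ) < Real.exp 1 := Real.exp_one_gt_d9
  have hl2 : (0.6931471803 : ℝ) < Real.log 2 := Real.log_two_gt_d9
  have hl2' : Real.log 2 < 0.6931471808 := Real.log_two_lt_d9
  -- bound first term: G * logb 2 (G/F) ≥ -F * 0.54
  have b1 : -(0.54 * F) ≤ G * Real.logb 2 (G / F) := by
    rw [t1]
    have h3 : Real.log hF / (hF * Real.log 2) ≤ 0.54 := by
      rw [div_le_iff₀ (by positivity)]
      calc Real.log hF ≤ hF / Real.exp 1 := hloghF
        _ ≤ 0.54 * (hF * Real.log 2) := by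
          rw [div_le_iff₀ (Real.exp_pos 1)]
          have h188 : (1.88:ℝ) ≤ Real.log 2 * Real.exp 1 := by nlinarith
          nlinarith
    nlinarith
  -- second term
  have t2 : (F - G) / Real.log 2 ≤ (n - G) * Real.logb 2 ((n - G) / (n - F)) := by
    have h4 := Real.log_le_sub_one_of_pos (div_pos hB hA)
    have h5 : Real.log ((n - G) / (n - F)) = - Real.log ((n - F) / (n - G)) := by
      rw [← Real.log_inv]; congr 1; field_simp
    have h6 : 1 - (n - F)/(n - G) ≤ Real.log ((n - G) / (n - F)) := by
      rw [h5]; linarith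
    have h7 : (n - G) * (1 - (n - F)/(n - G)) = F - G := by field_simp; ring
    have t2' : F - G ≤ (n - G) * Real.log ((n - G)/(n - F)) := by
      calc (F - G) = (n - G) * (1 - (n - F)/(n - G)) := h7.symm
        _ ≤ (n - G) * Real.log ((n - G)/(n - F)) := mul_le_mul_of_nonneg_left h6 hA.le
    rw [Real.logb, ← mul_div_assoc]
    exact (div_le_div_iff_of_pos_right hlog2).mpr t2'
  have hFG : 0.99 * F ≤ F - G := by nlinarith
  have b2 : 1.42 * F ≤ (n - G) * Real.logb 2 ((n - G) / (n - F)) := by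
    calc (1.42 : ℝ) * F ≤ (F - G) / Real.log 2 := by
          rw [le_div_iff₀ hlog2]; nlinarith
      _ ≤ _ := t2
  linarith

theorem stmt19 (f g h : ℝ → ℝ) (hf0 : ∀ x, 0 ≤ f x) (hg0 : ∀ x, 0 ≤ g x)
    (hfx : ∀ x > (0 : ℝ), f x < x) (hfw : Tendsto f atTop atTop)
    (hgh : ∀ x, g x = x / h x) (hh : Tendsto h atTop atTop) :
    Tendsto (fun n : ℕ =>
        (n : ℝ) * ((g (f n) / n) * Real.logb 2 ((g (f n) / n) / (f n / n)) +
          (1 - g (f n) / n) * Real.logb 2 ((1 - g (f n) / n) / (1 - f n / n))))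
      atTop atTop := by
  obtain ⟨N₀, hN₀⟩ := eventually_atTop.mp (hh.eventually_ge_atTop 100)
  have hfn : Tendsto (fun n : ℕ => f n) atTop atTop :=
    hfw.comp tendsto_natCast_atTop_atTop
  have hhalf : Tendsto (fun n : ℕ => f n / 2) atTop atTop :=
    hfn.atTop_div_const (by norm_num)
  apply tendsto_atTop_mono' atTop ?_ hhalf
  filter_upwards [hfn.eventually_ge_atTop (max 1 N₀), eventually_ge_atTop 1]
    with n hfn1 hn1
  have hF1 : 1 ≤ f n := le_trans (le_max_left 1 N₀) hfn1
  have hF0 : 0 < f n := by linarith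
  have h100 : 100 ≤ h (f n) := hN₀ (f n) (le_trans (le_max_right 1 N₀) hfn1)
  have hn0 : (0:ℝ) < (n:ℝ) := by exact_mod_cast Nat.lt_of_lt_of_le Nat.zero_lt_one hn1
  have hFn : f n < n := hfx n hn0
  have hh0 : (0:ℝ) < h (f n) := by linarith
  rw [hgh (f n)]
  set F := f n
  set G := F / h F with hGdef
  have e1 : (G/(n:ℝ))/(F/n) = G/F := by
    field_simp
  have hne1 : (1 - F/(n:ℝ)) ≠ 0 := by
    have : F/(n:ℝ) < 1 := (div_lt_one hn0).mpr hFn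
    have : 0 < 1 - F/(n:ℝ) := by linarith
    exact this.ne'
  have hne2 : ((n:ℝ) - F) ≠ 0 := (sub_pos.mpr hFn).ne'
  have e2 : (1 - G/(n:ℝ))/(1 - F/n) = ((n:ℝ) - G)/((n:ℝ) - F) := by
    rw [div_eq_div_iff hne1 hne2]
    field_simp
  rw [e1, e2]
  have e3 : (n:ℝ) * (G/n * Real.logb 2 (G/F) +
      (1 - G/n) * Real.logb 2 (((n:ℝ) - G)/((n:ℝ) - F)))
      = G * Real.logb 2 (G/F) + ((n:ℝ) - G) * Real.logb 2 (((n:ℝ) - G)/((n:ℝ) - F)) := by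
    field_simp
  rw [e3]
  exact key F n (h F) hF0 hFn h100
end
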